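/- arXiv:1703.05488 — 4 statements merged into one kernel-verified Lean document; each statement's English description precedes it below -/
import Mathlib

section
/- Let I ⊆ S = K[x_1,…,x_n] be a monomial ideal and k ≥ 0 an integer. If I is pretty k-clean, then I is pretty clean. -/
open MvPolynomial

noncomputable section

namespace Arxiv1703

variable {K : Type*} [Field K] {σ : Type*}

/-- `I` is a monomial ideal: generated by a set of monomials. -/
def IsMonomialIdeal (I : Ideal (MvPolynomial σ K)) : Prop :=
  ∃ G : Set (σ →₀ ℕ),
    I = Ideal.span ((fun a => (monomial a 1 : MvPolynomial σ K)) '' G)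

/-- `ass I = Ass (S/I)`, the associated primes of `S/I`. -/
def ass (I : Ideal (MvPolynomial σ K)) : Set (Ideal (MvPolynomial σ K)) :=
  associatedPrimes (MvPolynomial σ K) (MvPolynomial σ K ⧸ I)

/-- the minimal members (under inclusion) of a set of ideals. -/
def minSet (A : Set (Ideal (MvPolynomial σ K))) : Set (Ideal (MvPolynomial σ K)) :=
  {P | P ∈ A ∧ ∀ Q ∈ A, Q ≤ P → Q = P}

/-- `u` is a pretty cleaner monomial of `I`. -/
def IsPrettyCleaner (I : Ideal (MvPolynomial σ K)) (u : MvPolynomial σ K) : Prop :=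
  ∀ P ∈ ass (I.colon (Ideal.span {u})), ∀ Q ∈ ass (I ⊔ Ideal.span {u}), P ≤ Q → P = Q

/-- `u` is a cleaner monomial of `I`: `min(ass(I + Su)) ⊆ min(ass I)`. -/
def IsCleaner (I : Ideal (MvPolynomial σ K)) (u : MvPolynomial σ K) : Prop :=
  minSet (ass (I ⊔ Ideal.span {u})) ⊆ minSet (ass I)

/-- `I` is pretty `k`-clean (well-founded recursive definition, as inductive predicate). -/
inductive PrettyKClean (k : ℕ) : Ideal (MvPolynomial σ K) → Prop
  | prime (I : Ideal (MvPolynomial σ K)) (h : I.IsPrime) : PrettyKClean k I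
  | step (I : Ideal (MvPolynomial σ K)) (a : σ →₀ ℕ) (ha : a ≠ 0)
      (hu : (monomial a 1 : MvPolynomial σ K) ∉ I)
      (hsupp : a.support.card ≤ k + 1)
      (hcl : IsPrettyCleaner I (monomial a 1))
      (h1 : PrettyKClean k (I.colon (Ideal.span {(monomial a 1 : MvPolynomial σ K)})))
      (h2 : PrettyKClean k (I ⊔ Ideal.span {monomial a 1})) : PrettyKClean k I

/-- `I` is `k`-clean. -/
inductive KClean (k : ℕ) : Ideal (MvPolynomial σ K) → Prop
  | prime (I : Ideal (MvPolynomial σ K)) (h : I.IsPrime) : KClean k I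
  | step (I : Ideal (MvPolynomial σ K)) (a : σ →₀ ℕ) (ha : a ≠ 0)
      (hu : (monomial a 1 : MvPolynomial σ K) ∉ I)
      (hne : ass I = I.minimalPrimes)
      (hsupp : a.support.card ≤ k + 1)
      (hcl : IsCleaner I (monomial a 1))
      (h1 : KClean k (I.colon (Ideal.span {(monomial a 1 : MvPolynomial σ K)})))
      (h2 : KClean k (I ⊔ Ideal.span {monomial a 1})) : KClean k I

/-- `I` is pretty clean: it admits a pretty clean prime filtration by monomial ideals. -/
def IsPrettyClean (I : Ideal (MvPolynomial σ K)) : Prop :=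
  ∃ (r : ℕ) (c : Fin (r + 1) → Ideal (MvPolynomial σ K))
    (P : Fin r → Ideal (MvPolynomial σ K)),
    c 0 = I ∧ c (Fin.last r) = ⊤ ∧
    (∀ i, IsMonomialIdeal (c i)) ∧
    (∀ i : Fin r, c i.castSucc < c i.succ) ∧
    (∀ i : Fin r, (P i).IsPrime) ∧
    (∀ i : Fin r, Nonempty
      ((↥(c i.succ) ⧸ Submodule.comap (Submodule.subtype (c i.succ)) (c i.castSucc))
        ≃ₗ[MvPolynomial σ K] (MvPolynomial σ K ⧸ P i))) ∧
    (∀ i j : Fin r, i < j → P i ≤ P j → P i = P j)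

/-! ### Multicomplexes -/

variable {ι : Type*}

/-- `Γ ⊆ ℕ∞^ι` is a multicomplex. -/
def IsMulticomplex (Γ : Set (ι → ENat)) : Prop :=
  (∀ a ∈ Γ, ∀ b ≤ a, b ∈ Γ) ∧
  (∀ a ∈ Γ, ∃ m ∈ Γ, a ≤ m ∧ ∀ c ∈ Γ, m ≤ c → m = c)

/-- `M(Γ)`, the maximal elements of `Γ`. -/
def maxElts (Γ : Set (ι → ENat)) : Set (ι → ENat) :=
  {m | m ∈ Γ ∧ ∀ c ∈ Γ, m ≤ c → m = c}

def infpt (a : ι → ENat) : Set ι := {i | a i = ⊤}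
def fpt (a : ι → ENat) : Set ι := {i | a i ≠ ⊤}
def fptStar (a : ι → ENat) : Set ι := {i | a i ≠ 0 ∧ a i ≠ ⊤}

/-- the facets of `Γ`. -/
def facets (Γ : Set (ι → ENat)) : Set (ι → ENat) :=
  {a | a ∈ Γ ∧ ∀ m ∈ maxElts Γ, a ≤ m → infpt a = infpt m}

/-- `⟨A⟩`, the smallest multicomplex containing `A` (the order ideal generated by `A`). -/
def mcSpan (A : Set (ι → ENat)) : Set (ι → ENat) := {b | ∃ a ∈ A, b ≤ a}

def star (Γ : Set (ι → ENat)) (a : ι → ENat) : Set (ι → ENat) :=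
  mcSpan {b | b ∈ facets Γ ∧ a ≤ b}

def del (Γ : Set (ι → ENat)) (a : ι → ENat) : Set (ι → ENat) :=
  mcSpan {b | b ∈ facets Γ ∧ ¬ a ≤ b}

def link (Γ : Set (ι → ENat)) (a : ι → ENat) : Set (ι → ENat) :=
  mcSpan ((fun b => b - a) '' {b | b ∈ facets Γ ∧ a ≤ b})

/-- view a vector of naturals as a face in `ℕ∞^ι`. -/
def natFace (a : ι → ℕ) : ι → ENat := fun i => (a i : ENat)

/-- `T` is a Stanley set of degree `a`, i.e. `T = a + ⟨m⟩` for some `m ∈ {0,∞}^ι`. -/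
def IsStanleySet (a : ι → ℕ) (T : Set (ι → ENat)) : Prop :=
  ∃ m : ι → ENat, (∀ i, m i = 0 ∨ m i = ⊤) ∧
    T = (fun b => natFace a + b) '' mcSpan {m}

/-- `a ∈ Γ ∩ ℕ^ι` is a shedding face of `Γ`. -/
def IsSheddingFace (Γ : Set (ι → ENat)) (a : ι → ℕ) : Prop :=
  natFace a ∈ Γ ∧
  (∀ b ∈ facets (star Γ (natFace a)),
    IsStanleySet a (mcSpan {b} \ del Γ (natFace a))) ∧
  (∀ b ∈ facets (star Γ (natFace a)), ∀ c ∈ facets (del Γ (natFace a)),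
    fpt b ⊆ fpt c → fpt b = fpt c)

/-- `Γ` is a `k`-decomposable multicomplex. -/
inductive MCKDecomposable (k : ℕ) : Set (ι → ENat) → Prop
  | single (Γ : Set (ι → ENat)) (h : ∃! a, a ∈ facets Γ) : MCKDecomposable k Γ
  | shed (Γ : Set (ι → ENat)) (a : ι → ℕ)
      (ha : IsSheddingFace Γ a)
      (hcard : (fptStar (natFace a)).ncard ≤ k + 1)
      (h1 : MCKDecomposable k (link Γ (natFace a)))
      (h2 : MCKDecomposable k (del Γ (natFace a))) : MCKDecomposable k Γ

/-- `Γ` is a shellable multicomplex. -/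
def Shellable (Γ : Set (ι → ENat)) : Prop :=
  ∃ (r : ℕ) (a : Fin r → (ι → ENat)), Function.Injective a ∧ facets Γ = Set.range a ∧
    ∃ (b : Fin r → (ι → ℕ)) (m : Fin r → (ι → ENat)),
      (∀ i j, m i j = 0 ∨ m i j = ⊤) ∧
      (∀ i : Fin r, mcSpan {a i} \ mcSpan (a '' {j | j < i})
        = (fun c => natFace (b i) + c) '' mcSpan {m i}) ∧
      (∀ i j : Fin r, mcSpan {m i} ⊆ mcSpan {m j} →
        mcSpan {m i} = mcSpan {m j} ∨ j < i)

/-- the join of two multicomplexes. -/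
def mcJoin (Γ₁ Γ₂ : Set (ι → ENat)) : Set (ι → ENat) :=
  {c | ∃ a ∈ Γ₁, ∃ b ∈ Γ₂, c = a + b}

/-- two multicomplexes in `ℕ∞^n` are disjoint. -/
def mcDisjoint {n : ℕ} (Γ₁ Γ₂ : Set (Fin n → ENat)) : Prop :=
  ∃ m : ℕ, 1 < m ∧ m < n ∧
    (∀ a ∈ Γ₁, ∀ i : Fin n, m < (i : ℕ) + 1 → a i = 0) ∧
    (∀ a ∈ Γ₂, ∀ i : Fin n, (i : ℕ) + 1 ≤ m → a i = 0)

/-! ### Simplicial complexes -/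

variable {V : Type*} [DecidableEq V]

def IsSimplicialComplex (Δ : Set (Finset V)) : Prop :=
  ∀ s ∈ Δ, ∀ t ⊆ s, t ∈ Δ

def sFacets (Δ : Set (Finset V)) : Set (Finset V) :=
  {s | s ∈ Δ ∧ ∀ t ∈ Δ, s ⊆ t → s = t}

def sDel (Δ : Set (Finset V)) (s : Finset V) : Set (Finset V) :=
  {t | t ∈ Δ ∧ ¬ s ⊆ t}

def sLink (Δ : Set (Finset V)) (s : Finset V) : Set (Finset V) :=
  {t | t ∈ Δ ∧ t ∩ s = ∅ ∧ t ∪ s ∈ Δ}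

/-- `s` is a shedding face of `Δ`. -/
def sShedding (Δ : Set (Finset V)) (s : Finset V) : Prop :=
  ∀ t ∈ Δ, s ⊆ t → ∀ v ∈ s, ∃ w, w ∉ t ∧ (insert w t).erase v ∈ Δ

/-- `Δ` is a `k`-decomposable simplicial complex. -/
inductive SCKDecomposable (k : ℕ) : Set (Finset V) → Prop
  | simplex (s : Finset V) : SCKDecomposable k {t | t ⊆ s}
  | void : SCKDecomposable k (∅ : Set (Finset V))
  | empty : SCKDecomposable k ({∅} : Set (Finset V))
  | shed (Δ : Set (Finset V)) (s : Finset V) (hs : s ∈ Δ) (hcard : s.card ≤ k + 1)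
      (hshed : sShedding Δ s)
      (h1 : SCKDecomposable k (sDel Δ s))
      (h2 : SCKDecomposable k (sLink Δ s)) : SCKDecomposable k Δ

/-- the join of two simplicial complexes. -/
def sJoin (Δ₁ Δ₂ : Set (Finset V)) : Set (Finset V) :=
  {u | ∃ s ∈ Δ₁, ∃ t ∈ Δ₂, u = s ∪ t}

/-- `a_F`: the `{0,∞}`-vector of a subset `F ⊆ [n]`. -/
def faceOfFinset {n : ℕ} (F : Finset (Fin n)) : Fin n → ENat :=
  fun i => if i ∈ F then (⊤ : ENat) else 0

/-! ### The correspondence between multicomplexes and monomial ideals -/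

/-- `I(Γ)`: the monomial ideal associated to a multicomplex `Γ`. -/
def idealOf (K : Type*) [Field K] {σ : Type*} (Γ : Set (σ → ENat)) :
    Ideal (MvPolynomial σ K) :=
  Ideal.span {p | ∃ a : σ →₀ ℕ, natFace ⇑a ∉ Γ ∧ p = monomial a 1}

/-- `Γ(I)`: the multicomplex associated to a monomial ideal `I`. -/
def gammaOf {K : Type*} [Field K] {σ : Type*} (I : Ideal (MvPolynomial σ K)) :
    Set (σ → ENat) :=
  {c | ∀ b : σ →₀ ℕ, natFace ⇑b ≤ c → (monomial b 1 : MvPolynomial σ K) ∉ I}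

/-! ### Polarization -/

/-- the index type of the variables of the polarized ring. -/
abbrev polarType {n r : ℕ} (g : Fin r → (Fin n →₀ ℕ)) : Type :=
  (j : Fin n) × Fin (Finset.univ.sup fun i => g i j)

/-- the exponent vector of the polarization `v_i` of the generator `u_i = x^(g i)`. -/
def polarExp {n r : ℕ} (g : Fin r → (Fin n →₀ ℕ)) (i : Fin r) : polarType g →₀ ℕ :=
  Finsupp.equivFunOnFinite.symm fun p => if (p.2 : ℕ) < g i p.1 then 1 else 0

/-- the polarization `I^p` of the monomial ideal minimally generated by the `x^(g i)`. -/
def polarIdeal (K : Type*) [Field K] {n r : ℕ} (g : Fin r → (Fin n →₀ ℕ)) :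
    Ideal (MvPolynomial (polarType g) K) :=
  Ideal.span (Set.range fun i => (monomial (polarExp g i) 1 : MvPolynomial (polarType g) K))


/-! ### Auxiliary material for STATEMENT 0 -/

section Statement0Aux

-- ===== general commutative ring part =====
section CommRingPart
variable {R : Type*} [CommRing R]

lemma mul_mem_sup_map_iff {I L : Ideal R} {u : R} (hIu : I.colon (Ideal.span {u}) ≤ L)
    {f : R} : u * f ∈ I ⊔ Submodule.map (LinearMap.mulLeft R u) L ↔ f ∈ L := by
  constructor
  · intro h
    rw [Submodule.mem_sup] at h
    obtain ⟨y, hy, z, hz, hyz⟩ := h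
    obtain ⟨g, hg, rfl⟩ := hz
    rw [LinearMap.mulLeft_apply] at hyz
    have h1 : (f - g) * u ∈ I := by
      have : (f - g) * u = y := by linear_combination -hyz
      rwa [this]
    have h2 : f - g ∈ L := hIu (Ideal.mem_colon_span_singleton.2 h1)
    simpa using L.add_mem h2 hg
  · intro h
    exact Submodule.mem_sup_right ⟨f, h, rfl⟩

lemma sup_map_mono {I L L' : Ideal R} (u : R) (h : L ≤ L') :
    I ⊔ Submodule.map (LinearMap.mulLeft R u) L ≤ I ⊔ Submodule.map (LinearMap.mulLeft R u) L' :=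
  sup_le_sup_left (Submodule.map_mono h) I

lemma sup_map_strict_mono {I L L' : Ideal R} (u : R) (hLL' : L < L')
    (hIu : I.colon (Ideal.span {u}) ≤ L) :
    I ⊔ Submodule.map (LinearMap.mulLeft R u) L < I ⊔ Submodule.map (LinearMap.mulLeft R u) L' := by
  refine lt_of_le_of_ne (sup_map_mono u hLL'.le) (fun h => ?_)
  obtain ⟨f, hf', hf⟩ := SetLike.exists_of_lt hLL'
  have h1 : u * f ∈ I ⊔ Submodule.map (LinearMap.mulLeft R u) L' :=
    Submodule.mem_sup_right ⟨f, hf', rfl⟩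
  rw [← h] at h1
  exact hf ((mul_mem_sup_map_iff hIu).1 h1)

lemma factor_step {I L L' : Ideal R} (u : R) (_hLL' : L ≤ L')
    (hIu : I.colon (Ideal.span {u}) ≤ L) :
    Nonempty ((↥(I ⊔ Submodule.map (LinearMap.mulLeft R u) L') ⧸
        Submodule.comap (Submodule.subtype (I ⊔ Submodule.map (LinearMap.mulLeft R u) L'))
          (I ⊔ Submodule.map (LinearMap.mulLeft R u) L))
      ≃ₗ[R] (↥L' ⧸ Submodule.comap (Submodule.subtype L') L)) := by
  set A := I ⊔ Submodule.map (LinearMap.mulLeft R u) L with hA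
  set B := I ⊔ Submodule.map (LinearMap.mulLeft R u) L' with hB
  have hmem : ∀ f : ↥L', u * (f : R) ∈ B := fun f =>
    Submodule.mem_sup_right ⟨f, f.2, rfl⟩
  let inner : ↥L' →ₗ[R] ↥B :=
    LinearMap.codRestrict B ((LinearMap.mulLeft R u).comp (Submodule.subtype L')) hmem
  let ψ : ↥L' →ₗ[R] ↥B ⧸ Submodule.comap (Submodule.subtype B) A :=
    (Submodule.mkQ _).comp inner
  have hker : LinearMap.ker ψ = Submodule.comap (Submodule.subtype L') L := by
    ext f
    simp only [LinearMap.mem_ker, ψ, LinearMap.comp_apply, Submodule.mkQ_apply,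
      Submodule.Quotient.mk_eq_zero, Submodule.mem_comap]
    exact mul_mem_sup_map_iff hIu
  have hsurj : Function.Surjective ψ := by
    intro q
    obtain ⟨⟨x, hx⟩, rfl⟩ := Submodule.Quotient.mk_surjective _ q
    have hx' := hx
    rw [hB, Submodule.mem_sup] at hx'
    obtain ⟨y, hy, z, hz, hyz⟩ := hx'
    obtain ⟨g, hg, rfl⟩ := hz
    rw [LinearMap.mulLeft_apply] at hyz
    refine ⟨⟨g, hg⟩, ?_⟩
    show Submodule.Quotient.mk (inner ⟨g, hg⟩) = Submodule.Quotient.mk ⟨x, hx⟩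
    rw [Submodule.Quotient.eq]
    have hco : ((inner ⟨g, hg⟩ - ⟨x, hx⟩ : ↥B) : R) = u * g - x := rfl
    rw [Submodule.mem_comap]
    show ((inner ⟨g, hg⟩ - ⟨x, hx⟩ : ↥B) : R) ∈ A
    rw [hco]
    have : u * g - x = -y := by linear_combination hyz
    rw [this]
    exact A.neg_mem (Submodule.mem_sup_left hy)
  exact ⟨((Submodule.quotEquivOfEq _ _ hker.symm).trans
    (ψ.quotKerEquivOfSurjective hsurj)).symm⟩

lemma factor_top (I : Ideal R) :
    Nonempty ((↥(⊤ : Ideal R) ⧸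
        Submodule.comap (Submodule.subtype (⊤ : Ideal R)) I) ≃ₗ[R] (R ⧸ I)) := by
  let φ : ↥(⊤ : Ideal R) →ₗ[R] R ⧸ I := (Submodule.mkQ I).comp (Submodule.subtype ⊤)
  have hker : LinearMap.ker φ = Submodule.comap (Submodule.subtype (⊤ : Ideal R)) I := by
    ext x
    simp [φ, Submodule.Quotient.mk_eq_zero, Ideal.Quotient.eq_zero_iff_mem]
  have hsurj : Function.Surjective φ := by
    intro q
    obtain ⟨x, rfl⟩ := Submodule.Quotient.mk_surjective _ q
    exact ⟨⟨x, trivial⟩, rfl⟩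
  exact ⟨(Submodule.quotEquivOfEq _ _ hker.symm).trans (φ.quotKerEquivOfSurjective hsurj)⟩

lemma sup_map_colon (I : Ideal R) (u : R) :
    I ⊔ Submodule.map (LinearMap.mulLeft R u) (I.colon (Ideal.span {u})) = I := by
  rw [sup_eq_left]
  rintro x ⟨y, hy, rfl⟩
  have := Ideal.mem_colon_span_singleton.1 hy
  simpa [LinearMap.mulLeft_apply, mul_comm] using this

lemma map_mulLeft_top (u : R) :
    Submodule.map (LinearMap.mulLeft R u) (⊤ : Ideal R) = Ideal.span {u} := by
  ext x
  simp only [Submodule.mem_map, Submodule.mem_top, true_and, LinearMap.mulLeft_apply,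
    Ideal.mem_span_singleton]
  constructor
  · rintro ⟨y, rfl⟩; exact Dvd.intro y rfl
  · rintro ⟨y, rfl⟩; exact ⟨y, rfl⟩

lemma smul_mk_coe {B : Ideal R} (A : Submodule R ↥B) (t : R) (z : ↥B) :
    t • (Submodule.Quotient.mk z : ↥B ⧸ A) = Submodule.Quotient.mk (t • z) :=
  (Submodule.Quotient.mk_smul A t z).symm

lemma factor_annih {A B : Ideal R} {P : Ideal R}
    (e : (↥B ⧸ Submodule.comap (Submodule.subtype B) A) ≃ₗ[R] R ⧸ P)
    {s : R} (hs : s ∈ P) {x : R} (hx : x ∈ B) : s * x ∈ A := by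
  have h2 : ∀ q : R ⧸ P, s • q = 0 := by
    intro q
    obtain ⟨w, rfl⟩ := Submodule.Quotient.mk_surjective _ q
    rw [← Submodule.Quotient.mk_smul, Submodule.Quotient.mk_eq_zero]
    rw [smul_eq_mul]
    exact Ideal.mul_mem_right _ _ hs
  have h3 : s • (Submodule.Quotient.mk (⟨x, hx⟩ : ↥B) :
      ↥B ⧸ Submodule.comap (Submodule.subtype B) A) = 0 := by
    have := h2 (e (Submodule.Quotient.mk ⟨x, hx⟩))
    rw [← map_smul] at this
    exact e.injective (by rw [this, map_zero])
  rw [smul_mk_coe, Submodule.Quotient.mk_eq_zero] at h3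
  exact h3

lemma factor_witness {A B : Ideal R} {P : Ideal R}
    (e : (↥B ⧸ Submodule.comap (Submodule.subtype B) A) ≃ₗ[R] R ⧸ P) :
    ∃ x, x ∈ B ∧ ∀ t : R, t * x ∈ A ↔ t ∈ P := by
  obtain ⟨z, hz⟩ := Submodule.Quotient.mk_surjective _ (e.symm 1)
  refine ⟨(z : R), z.2, fun t => ?_⟩
  have h1 : (t * (z : R) ∈ A) ↔ t • (Submodule.Quotient.mk z :
      ↥B ⧸ Submodule.comap (Submodule.subtype B) A) = 0 := by
    rw [smul_mk_coe, Submodule.Quotient.mk_eq_zero]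
    rfl
  rw [h1, hz]
  have h2 : t • e.symm 1 = e.symm (t • (1 : R ⧸ P)) := (map_smul e.symm t 1).symm
  rw [h2]
  have h3 : e.symm (t • (1 : R ⧸ P)) = 0 ↔ t • (1 : R ⧸ P) = 0 := by
    constructor
    · intro h
      have := congrArg e h
      rwa [LinearEquiv.apply_symm_apply, map_zero] at this
    · intro h; rw [h, map_zero]
  rw [h3]
  have h4 : t • (1 : R ⧸ P) = Submodule.Quotient.mk t := by
    have : (1 : R ⧸ P) = Submodule.Quotient.mk (1 : R) := rfl
    rw [this, ← Submodule.Quotient.mk_smul, smul_eq_mul, mul_one]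
  rw [h4, Submodule.Quotient.mk_eq_zero]

lemma nonempty_factor_congr {A A' B B' P P' : Ideal R}
    (hA : A = A') (hB : B = B') (hP : P = P')
    (h : Nonempty ((↥B' ⧸ Submodule.comap (Submodule.subtype B') A') ≃ₗ[R] R ⧸ P')) :
    Nonempty ((↥B ⧸ Submodule.comap (Submodule.subtype B) A) ≃ₗ[R] R ⧸ P) := by
  subst hA; subst hB; subst hP; exact h

lemma chain_le {c : ℕ → Ideal R} {r : ℕ} (hmono : ∀ i < r, c i ≤ c (i+1)) :
    ∀ i ≤ r, ∀ j ≤ i, c j ≤ c i := by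
  intro i hi
  induction i with
  | zero => intro j hj; interval_cases j; exact le_rfl
  | succ n ih =>
    intro j hj
    rcases Nat.lt_or_ge j (n+1) with h | h
    · exact (ih (by omega) j (by omega)).trans (hmono n (by omega))
    · have : j = n + 1 := by omega
      rw [this]

lemma pretty_clean_primes_assoc (r : ℕ) (c P : ℕ → Ideal R)
    (hmono : ∀ i < r, c i ≤ c (i+1))
    (hprime : ∀ i < r, (P i).IsPrime)
    (hfac : ∀ i < r, Nonempty ((↥(c (i+1)) ⧸
        Submodule.comap (Submodule.subtype (c (i+1))) (c i)) ≃ₗ[R] R ⧸ P i))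
    (hpc : ∀ i j, i < j → j < r → P i ≤ P j → P i = P j)
    {i₀ : ℕ} (hi₀ : i₀ < r) : P i₀ ∈ associatedPrimes R (R ⧸ c 0) := by
  classical
  have hex : ∃ i, i < r ∧ P i = P i₀ := ⟨i₀, hi₀, rfl⟩
  set i := Nat.find hex with hidef
  obtain ⟨hir, hiP⟩ : i < r ∧ P i = P i₀ := Nat.find_spec hex
  have hile : i ≤ i₀ := Nat.find_min' hex ⟨hi₀, rfl⟩
  have hsel : ∀ j, ∃ s, j < i → (s ∈ P j ∧ s ∉ P i₀) := by
    intro j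
    by_cases hj : j < i
    · have hjr : j < r := by omega
      have hne : P j ≠ P i₀ := fun h => Nat.find_min hex hj ⟨hjr, h⟩
      have hnle : ¬ P j ≤ P i₀ := by
        intro hle
        rcases Nat.lt_or_ge j i₀ with h' | h'
        · exact hne (hpc j i₀ h' hi₀ hle)
        · have : j = i₀ := by omega
          exact hne (by rw [this])
      obtain ⟨s, hs1, hs2⟩ := SetLike.not_le_iff_exists.1 hnle
      exact ⟨s, fun _ => ⟨hs1, hs2⟩⟩
    · exact ⟨0, fun h => absurd h hj⟩
  choose s hs using hsel
  set sp := ∏ j ∈ Finset.range i, s j with hspdef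
  have hsp : sp ∉ P i₀ := by
    intro hmem
    have := (Ideal.IsPrime.prod_mem_iff (hp := hprime i₀ hi₀)).1 hmem
    obtain ⟨j, hj, hjmem⟩ := this
    exact (hs j (Finset.mem_range.1 hj)).2 hjmem
  have hdesc : ∀ k ≤ i, ∀ z ∈ c k, (∏ j ∈ Finset.range k, s j) * z ∈ c 0 := by
    intro k
    induction k with
    | zero => intro _ z hz; simpa using hz
    | succ n ih =>
      intro hn z hz
      obtain ⟨e⟩ := hfac n (by omega)
      have h1 : s n * z ∈ c n := factor_annih e (hs n (by omega)).1 hz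
      have h2 := ih (by omega) _ h1
      rw [Finset.prod_range_succ]
      have heq : (∏ j ∈ Finset.range n, s j) * s n * z
          = (∏ j ∈ Finset.range n, s j) * (s n * z) := by ring
      rw [heq]
      exact h2
  obtain ⟨e⟩ := hfac i hir
  obtain ⟨x, hxB, hxcol⟩ := factor_witness e
  refine ⟨hiP ▸ hprime i hir, Submodule.Quotient.mk (sp * x), ?_⟩
  suffices hsuf : P i₀ = (⊥ : Submodule R (R ⧸ c 0)).colon {Submodule.Quotient.mk (sp * x)} by
    rw [← hsuf]; exact (hprime i₀ hi₀).radical.symm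
  ext t
  rw [Submodule.mem_colon_singleton, Submodule.mem_bot, ← Submodule.Quotient.mk_smul,
    Submodule.Quotient.mk_eq_zero]
  constructor
  · intro ht
    have h1 : t * x ∈ c i := (hxcol t).2 (hiP ▸ ht)
    have h2 := hdesc i le_rfl _ h1
    have heq : t • (sp * x) = sp * (t * x) := by rw [smul_eq_mul]; ring
    rw [heq]
    exact h2
  · intro ht
    rw [smul_eq_mul] at ht
    have h1 : (t * sp) * x ∈ c 0 := by
      have heq : (t * sp) * x = t * (sp * x) := by ring
      rw [heq]; exact ht
    have h2 : (t * sp) * x ∈ c i := chain_le hmono i (by omega) 0 (by omega) h1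
    have h3 : t * sp ∈ P i := (hxcol (t * sp)).1 h2
    rw [hiP] at h3
    rcases (hprime i₀ hi₀).mem_or_mem h3 with h | h
    · exact h
    · exact absurd h hsp

end CommRingPart

-- ===== monomial ideal part =====

lemma monomial_mem_of_mem_support {I : Ideal (MvPolynomial σ K)} (hI : IsMonomialIdeal I)
    {p : MvPolynomial σ K} (hp : p ∈ I) {b : σ →₀ ℕ} (hb : b ∈ p.support) :
    (monomial b 1 : MvPolynomial σ K) ∈ I := by
  classical
  obtain ⟨G, rfl⟩ := hI
  set I := Ideal.span ((fun a => (monomial a 1 : MvPolynomial σ K)) '' G) with hIdef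
  refine Submodule.span_induction (p := fun p _ => ∀ b ∈ p.support,
    (monomial b 1 : MvPolynomial σ K) ∈ I) ?_ ?_ ?_ ?_ hp b hb
  · rintro x ⟨a0, ha0, rfl⟩ b hb
    have := MvPolynomial.support_monomial_subset hb
    simp only [Finset.mem_singleton] at this
    rw [this]
    exact Ideal.subset_span ⟨a0, ha0, rfl⟩
  · intro b hb; simp at hb
  · intro x y hx hy ihx ihy b hb
    rcases Finset.mem_union.1 (MvPolynomial.support_add hb) with h | h
    · exact ihx b h
    · exact ihy b h
  · intro a x hx ih b hb
    have hb' : MvPolynomial.coeff b (a * x) ≠ 0 := by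
      simpa [MvPolynomial.mem_support_iff, smul_eq_mul] using hb
    rw [MvPolynomial.coeff_mul] at hb'
    obtain ⟨⟨c, d⟩, hcd, hne⟩ := Finset.exists_ne_zero_of_sum_ne_zero hb'
    have hd : d ∈ x.support := by
      rw [MvPolynomial.mem_support_iff]
      intro h; rw [h, mul_zero] at hne; exact hne rfl
    have hmem : (monomial d 1 : MvPolynomial σ K) ∈ I := ih d hd
    have hcd' : c + d = b := Finset.HasAntidiagonal.mem_antidiagonal.1 hcd
    have : (monomial c 1 : MvPolynomial σ K) * monomial d 1 ∈ I := Ideal.mul_mem_left _ _ hmem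
    rwa [MvPolynomial.monomial_mul, hcd', one_mul] at this

lemma isMonomialIdeal_of_support (I : Ideal (MvPolynomial σ K))
    (h : ∀ p ∈ I, ∀ b ∈ MvPolynomial.support p, (monomial b 1 : MvPolynomial σ K) ∈ I) :
    IsMonomialIdeal I := by
  refine ⟨{b | (monomial b 1 : MvPolynomial σ K) ∈ I}, le_antisymm ?_ ?_⟩
  · intro p hp
    have hrep : p = ∑ b ∈ p.support, monomial b (MvPolynomial.coeff b p) :=
      (support_sum_monomial_coeff p).symm
    rw [hrep]
    refine Submodule.sum_mem _ ?_
    intro b hb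
    have hm : (monomial b 1 : MvPolynomial σ K) ∈ Ideal.span
        ((fun a => (monomial a 1 : MvPolynomial σ K)) ''
          {b | (monomial b 1 : MvPolynomial σ K) ∈ I}) :=
      Ideal.subset_span ⟨b, h p hp b hb, rfl⟩
    have heq : (monomial b (MvPolynomial.coeff b p) : MvPolynomial σ K)
        = MvPolynomial.C (MvPolynomial.coeff b p) * monomial b 1 := by
      rw [MvPolynomial.C_mul_monomial, mul_one]
    rw [heq]
    exact Ideal.mul_mem_left _ _ hm
  · rw [Ideal.span_le]
    rintro x ⟨a, ha, rfl⟩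
    exact ha

lemma isMonomialIdeal_top : IsMonomialIdeal (⊤ : Ideal (MvPolynomial σ K)) := by
  refine ⟨{0}, ?_⟩
  rw [Set.image_singleton]
  rw [MvPolynomial.monomial_zero']
  simp [Ideal.span_singleton_one]

lemma isMonomialIdeal_colon {I : Ideal (MvPolynomial σ K)} (hI : IsMonomialIdeal I)
    (a : σ →₀ ℕ) :
    IsMonomialIdeal (I.colon (Ideal.span {(monomial a 1 : MvPolynomial σ K)})) := by
  apply isMonomialIdeal_of_support
  intro p hp b hb
  rw [Ideal.mem_colon_span_singleton] at hp ⊢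
  have hsupp : b + a ∈ (p * monomial a 1).support := by
    rw [MvPolynomial.mem_support_iff, MvPolynomial.coeff_mul_monomial, mul_one]
    exact MvPolynomial.mem_support_iff.1 hb
  have := monomial_mem_of_mem_support hI hp hsupp
  rwa [MvPolynomial.monomial_mul, one_mul]

lemma map_mulLeft_monomial_span (a : σ →₀ ℕ) (G : Set (σ →₀ ℕ)) :
    Submodule.map (LinearMap.mulLeft (MvPolynomial σ K) (monomial a 1))
      (Ideal.span ((fun b => (monomial b 1 : MvPolynomial σ K)) '' G))
    = Ideal.span ((fun b => (monomial b 1 : MvPolynomial σ K)) '' ((fun b => a + b) '' G)) := by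
  rw [← Ideal.submodule_span_eq, Submodule.map_span, ← Ideal.submodule_span_eq]
  congr 1
  rw [← Set.image_comp, ← Set.image_comp]
  apply Set.image_congr
  intro b _
  simp only [Function.comp_apply, LinearMap.mulLeft_apply, MvPolynomial.monomial_mul, one_mul]

lemma isMonomialIdeal_sup_map {I L : Ideal (MvPolynomial σ K)} (hI : IsMonomialIdeal I)
    (hL : IsMonomialIdeal L) (a : σ →₀ ℕ) :
    IsMonomialIdeal (I ⊔ Submodule.map
      (LinearMap.mulLeft (MvPolynomial σ K) (monomial a 1)) L) := by
  obtain ⟨G₁, rfl⟩ := hI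
  obtain ⟨G₂, rfl⟩ := hL
  refine ⟨G₁ ∪ (fun b => a + b) '' G₂, ?_⟩
  rw [map_mulLeft_monomial_span, Set.image_union, Ideal.span_union]

-- ===== ℕ-indexed pretty clean filtrations =====

def PCData (I : Ideal (MvPolynomial σ K)) : Prop :=
  ∃ (r : ℕ) (c P : ℕ → Ideal (MvPolynomial σ K)),
    c 0 = I ∧ c r = ⊤ ∧
    (∀ i ≤ r, IsMonomialIdeal (c i)) ∧
    (∀ i < r, c i < c (i+1)) ∧
    (∀ i < r, (P i).IsPrime) ∧
    (∀ i < r, Nonempty ((↥(c (i+1)) ⧸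
        Submodule.comap (Submodule.subtype (c (i+1))) (c i))
      ≃ₗ[MvPolynomial σ K] (MvPolynomial σ K ⧸ P i))) ∧
    (∀ i j, i < j → j < r → P i ≤ P j → P i = P j)

lemma PCData.isPrettyClean {I : Ideal (MvPolynomial σ K)} (h : PCData I) :
    IsPrettyClean I := by
  obtain ⟨r, c, P, h0, hr, hmon, hlt, hpr, hfac, hpc⟩ := h
  refine ⟨r, fun i => c i.val, fun i => P i.val, h0, by simp [hr], ?_, ?_, ?_, ?_, ?_⟩
  · intro i
    exact hmon i.val (Nat.lt_succ_iff.1 i.isLt)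
  · intro i
    simpa [Fin.coe_castSucc, Fin.val_succ] using hlt i.val i.isLt
  · intro i
    exact hpr i.val i.isLt
  · intro i
    exact hfac i.val i.isLt
  · intro i j hij hle
    exact hpc i.val j.val hij j.isLt hle

lemma prettyKClean_PCData {k : ℕ} {I : Ideal (MvPolynomial σ K)}
    (h : PrettyKClean k I) : IsMonomialIdeal I → PCData I := by
  induction h with
  | prime J hp =>
    intro hmonJ
    refine ⟨1, fun i => if i = 0 then J else ⊤, fun _ => J, by simp, by simp, ?_, ?_, ?_, ?_, ?_⟩
    · intro i hi
      rcases Nat.le_one_iff_eq_zero_or_eq_one.1 hi with h | h <;> subst h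
      · simpa using hmonJ
      · simpa using isMonomialIdeal_top
    · intro i hi
      have : i = 0 := by omega
      subst this
      simp only [if_pos rfl]
      norm_num
      exact lt_top_iff_ne_top.2 hp.ne_top
    · intro i hi
      exact hp
    · intro i hi
      have : i = 0 := by omega
      subst this
      simp only [if_pos rfl]
      exact factor_top J
    · intro i j hij hjr hle
      omega
  | step J a ha hu hsupp hcl h1 h2 ih1 ih2 =>
    intro hmonJ
    obtain ⟨r₁, c₁, P₁, hc₁0, hc₁r, hmon₁, hlt₁, hpr₁, hfac₁, hpc₁⟩ :=
      ih1 (isMonomialIdeal_colon hmonJ a)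
    have hmonsup : IsMonomialIdeal (J ⊔ Ideal.span {(monomial a 1 : MvPolynomial σ K)}) := by
      have := isMonomialIdeal_sup_map hmonJ isMonomialIdeal_top a
      rwa [map_mulLeft_top] at this
    obtain ⟨r₂, c₂, P₂, hc₂0, hc₂r, hmon₂, hlt₂, hpr₂, hfac₂, hpc₂⟩ := ih2 hmonsup
    have hmono₁ : ∀ i < r₁, c₁ i ≤ c₁ (i+1) := fun i hi => (hlt₁ i hi).le
    have hcolle : ∀ i ≤ r₁,
        J.colon (Ideal.span {(monomial a 1 : MvPolynomial σ K)}) ≤ c₁ i := by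
      intro i hi
      rw [← hc₁0]
      exact chain_le hmono₁ i hi 0 (Nat.zero_le _)
    have hass₁ : ∀ i < r₁,
        P₁ i ∈ ass (J.colon (Ideal.span {(monomial a 1 : MvPolynomial σ K)})) := by
      intro i hi
      have := pretty_clean_primes_assoc r₁ c₁ P₁ hmono₁ hpr₁ hfac₁ hpc₁ hi
      rw [hc₁0] at this
      exact this
    have hass₂ : ∀ i < r₂,
        P₂ i ∈ ass (J ⊔ Ideal.span {(monomial a 1 : MvPolynomial σ K)}) := by
      intro i hi
      have := pretty_clean_primes_assoc r₂ c₂ P₂ (fun i hi => (hlt₂ i hi).le) hpr₂ hfac₂ hpc₂ hi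
      rw [hc₂0] at this
      exact this
    set u : MvPolynomial σ K := monomial a 1 with hudef
    set c : ℕ → Ideal (MvPolynomial σ K) := fun i =>
      if i ≤ r₁ then J ⊔ Submodule.map (LinearMap.mulLeft (MvPolynomial σ K) u) (c₁ i)
      else c₂ (i - r₁) with hcdef
    set P : ℕ → Ideal (MvPolynomial σ K) := fun i =>
      if i < r₁ then P₁ i else P₂ (i - r₁) with hPdef
    have hcfirst : ∀ i, i ≤ r₁ →
        c i = J ⊔ Submodule.map (LinearMap.mulLeft (MvPolynomial σ K) u) (c₁ i) := by
      intro i hi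
      simp only [hcdef]
      rw [if_pos hi]
    have hcsec : ∀ i, r₁ ≤ i → c i = c₂ (i - r₁) := by
      intro i hi
      rcases Nat.eq_or_lt_of_le hi with h | h
      · rw [← h, Nat.sub_self, hc₂0, hcfirst r₁ le_rfl, hc₁r, map_mulLeft_top]
      · simp only [hcdef]
        rw [if_neg (by omega)]
    refine ⟨r₁ + r₂, c, P, ?_, ?_, ?_, ?_, ?_, ?_, ?_⟩
    · rw [hcfirst 0 (Nat.zero_le _), hc₁0, sup_map_colon]
    · rw [hcsec (r₁+r₂) (by omega)]
      simpa using hc₂r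
    · intro i hi
      by_cases h : i ≤ r₁
      · rw [hcfirst i h]
        exact isMonomialIdeal_sup_map hmonJ (hmon₁ i h) a
      · rw [hcsec i (by omega)]
        exact hmon₂ (i - r₁) (by omega)
    · intro i hi
      rcases Nat.lt_or_ge i r₁ with h | h
      · rw [hcfirst i (by omega), hcfirst (i+1) (by omega)]
        exact sup_map_strict_mono u (hlt₁ i h) (hcolle i (by omega))
      · rw [hcsec i h, hcsec (i+1) (by omega)]
        have heq : i + 1 - r₁ = (i - r₁) + 1 := by omega
        rw [heq]
        exact hlt₂ (i - r₁) (by omega)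
    · intro i hi
      by_cases h : i < r₁
      · simp only [hPdef]; rw [if_pos h]; exact hpr₁ i h
      · simp only [hPdef]; rw [if_neg h]; exact hpr₂ (i - r₁) (by omega)
    · intro i hi
      rcases Nat.lt_or_ge i r₁ with h | h
      · have e1 := hcfirst i (by omega)
        have e2 := hcfirst (i+1) (by omega)
        have hP : P i = P₁ i := by simp only [hPdef]; rw [if_pos h]
        obtain ⟨e⟩ := hfac₁ i h
        obtain ⟨f⟩ := factor_step (I := J) u (hlt₁ i h).le (hcolle i (by omega))
        exact nonempty_factor_congr e1 e2 hP ⟨f.trans e⟩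
      · have e1 := hcsec i h
        have e2 := hcsec (i+1) (by omega)
        have heq : i + 1 - r₁ = (i - r₁) + 1 := by omega
        rw [heq] at e2
        have hP : P i = P₂ (i - r₁) := by simp only [hPdef]; rw [if_neg (by omega)]
        exact nonempty_factor_congr e1 e2 hP (hfac₂ (i - r₁) (by omega))
    · intro i j hij hjr hle
      rcases Nat.lt_or_ge j r₁ with hj | hj
      · have hi' : i < r₁ := by omega
        have hPi : P i = P₁ i := by simp only [hPdef]; rw [if_pos hi']
        have hPj : P j = P₁ j := by simp only [hPdef]; rw [if_pos hj]
        rw [hPi, hPj] at hle ⊢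
        exact hpc₁ i j hij hj hle
      · rcases Nat.lt_or_ge i r₁ with hi' | hi'
        · have hPi : P i = P₁ i := by simp only [hPdef]; rw [if_pos hi']
          have hPj : P j = P₂ (j - r₁) := by simp only [hPdef]; rw [if_neg (by omega)]
          rw [hPi, hPj] at hle ⊢
          exact hcl _ (hass₁ i hi') _ (hass₂ (j - r₁) (by omega)) hle
        · have hPi : P i = P₂ (i - r₁) := by simp only [hPdef]; rw [if_neg (by omega)]
          have hPj : P j = P₂ (j - r₁) := by simp only [hPdef]; rw [if_neg (by omega)]
          rw [hPi, hPj] at hle ⊢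
          exact hpc₂ (i - r₁) (j - r₁) (by omega) (by omega) hle

end Statement0Aux


/-- every pretty `k`-clean monomial ideal is pretty clean. -/
theorem prettyKClean_isPrettyClean {K : Type*} [Field K] {n : ℕ} (k : ℕ)
    (I : Ideal (MvPolynomial (Fin n) K)) (hI : IsMonomialIdeal I)
    (h : PrettyKClean k I) : IsPrettyClean I := by
  exact (prettyKClean_PCData h hI).isPrettyClean

end Arxiv1703
end
end

section
/- Let I ⊆ S = K[x_1,…,x_n] be a monomial ideal and let I = I_0 ⊂ I_1 ⊂ … ⊂ I_r = S be a chain of monomial ideals for which there exist monomials u_1,…,u_r with I_i = I_{i−1} + S u_i and such that P_i := I_{i−1} : u_i is a prime ideal for each i = 1,…,r. Assume that for all i < j with P_i ⊆ P_j one has P_i = P_j. Then ass(I_i) = {P_{i+1},…,P_r} for all i = 0,…,r. -/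
open MvPolynomial

noncomputable section

namespace Arxiv1703

variable {K : Type*} [Field K] {σ : Type*}

/-! ### Multicomplexes -/

variable {ι : Type*}

/-! ### Simplicial complexes -/

variable {V : Type*} [DecidableEq V]

section Helpers

variable {R : Type*} [CommRing R] [IsNoetherianRing R]


theorem mem_ass_quot_iff (I Q : Ideal R) :
    Q ∈ associatedPrimes R (R ⧸ I) ↔ Q.IsPrime ∧ ∃ s : R, Q = I.colon (Ideal.span {s}) := by
  rw [AssociatedPrimes.mem_iff, isAssociatedPrime_iff]
  refine and_congr_right fun hQ => ?_
  constructor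
  · rintro ⟨x, hx⟩
    obtain ⟨s, rfl⟩ := Ideal.Quotient.mk_surjective x
    refine ⟨s, hx.trans ?_⟩
    ext r
    have hs : r • Ideal.Quotient.mk I s = Ideal.Quotient.mk I (r * s) := rfl
    rw [Submodule.mem_colon_singleton, Submodule.mem_bot, Ideal.mem_colon_span_singleton,
      hs, Ideal.Quotient.eq_zero_iff_mem]
  · rintro ⟨s, rfl⟩
    refine ⟨Ideal.Quotient.mk I s, ?_⟩
    ext r
    have hs : r • Ideal.Quotient.mk I s = Ideal.Quotient.mk I (r * s) := rfl
    rw [Submodule.mem_colon_singleton, Submodule.mem_bot, Ideal.mem_colon_span_singleton,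
      hs, Ideal.Quotient.eq_zero_iff_mem]

/-- P = I:u belongs to ass I, provided it is prime. -/
theorem step2 (I : Ideal R) (u : R) (hP : (I.colon (Ideal.span {u})).IsPrime) :
    I.colon (Ideal.span {u}) ∈ associatedPrimes R (R ⧸ I) :=
  (mem_ass_quot_iff I _).2 ⟨hP, u, rfl⟩

/-- ass I ⊆ {P} ∪ ass (I + (u)) where P = I:u. -/
theorem step1 (I : Ideal R) (u : R) (hP : (I.colon (Ideal.span {u})).IsPrime)
    {Q : Ideal R} (hQ : Q ∈ associatedPrimes R (R ⧸ I)) :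
    Q = I.colon (Ideal.span {u}) ∨ Q ∈ associatedPrimes R (R ⧸ (I ⊔ Ideal.span {u})) := by
  obtain ⟨hQp, x, rfl⟩ := (mem_ass_quot_iff I Q).1 hQ
  by_cases h : ∃ s, s ∉ I.colon (Ideal.span {x}) ∧ s * x ∈ I ⊔ Ideal.span {u}
  · left
    obtain ⟨s, hs, hsx⟩ := h
    obtain ⟨a, ha, b, hb, hab⟩ := Submodule.mem_sup.1 hsx
    obtain ⟨t, rfl⟩ := Ideal.mem_span_singleton'.1 hb
    have ht : t ∉ I.colon (Ideal.span {u}) := by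
      intro ht
      apply hs
      rw [Ideal.mem_colon_span_singleton] at ht ⊢
      rw [← hab]
      exact I.add_mem ha ht
    ext w
    rw [Ideal.mem_colon_span_singleton, Ideal.mem_colon_span_singleton]
    constructor
    · intro hw
      have h1 : w * (s * x) ∈ I := by
        have := I.mul_mem_left s hw
        rw [show s * (w * x) = w * (s * x) by ring] at this
        exact this
      rw [← hab, mul_add] at h1
      have h2 : w * (t * u) ∈ I := by
        have := I.mul_mem_left w ha
        simpa using (Ideal.sub_mem I h1 this)
      have h3 : w * t ∈ I.colon (Ideal.span {u}) :=
        Ideal.mem_colon_span_singleton.2 (by rwa [← mul_assoc] at h2)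
      exact Ideal.mem_colon_span_singleton.1 ((hP.mem_or_mem h3).resolve_right ht)
    · intro hw
      have h1 : w * (s * x) ∈ I := by
        rw [← hab, mul_add]
        refine I.add_mem (I.mul_mem_left w ha) ?_
        have := I.mul_mem_left t hw
        rw [show t * (w * u) = w * (t * u) by ring] at this
        exact this
      have h2 : w * s ∈ I.colon (Ideal.span {x}) :=
        Ideal.mem_colon_span_singleton.2 (by rwa [← mul_assoc] at h1)
      exact Ideal.mem_colon_span_singleton.1 ((hQp.mem_or_mem h2).resolve_right hs)
  · right
    push_neg at h
    rw [mem_ass_quot_iff]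
    refine ⟨hQp, x, ?_⟩
    ext w
    rw [Ideal.mem_colon_span_singleton, Ideal.mem_colon_span_singleton]
    constructor
    · intro hw
      exact Ideal.mem_sup_left hw
    · intro hw
      by_contra hw'
      exact h w (fun hmem => hw' (Ideal.mem_colon_span_singleton.1 hmem)) hw

/-- ass (I + (u)) ⊆ ass I ∪ {Q ⊇ P}. -/
theorem step3 (I : Ideal R) (u : R)
    {Q : Ideal R} (hQ : Q ∈ associatedPrimes R (R ⧸ (I ⊔ Ideal.span {u}))) :
    Q ∈ associatedPrimes R (R ⧸ I) ∨ I.colon (Ideal.span {u}) ≤ Q := by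
  obtain ⟨hQp, x, hx⟩ := (mem_ass_quot_iff _ Q).1 hQ
  by_cases hple : I.colon (Ideal.span {u}) ≤ Q
  · exact Or.inr hple
  · left
    obtain ⟨p, hpP, hpQ⟩ := Set.not_subset.1 hple
    have hpu : p * u ∈ I := Ideal.mem_colon_span_singleton.1 hpP
    rw [mem_ass_quot_iff]
    refine ⟨hQp, p * x, ?_⟩
    ext w
    rw [Ideal.mem_colon_span_singleton]
    constructor
    · intro hw
      have hwx : w * x ∈ I ⊔ Ideal.span {u} := by
        have : w ∈ (I ⊔ Ideal.span {u}).colon (Ideal.span {x}) := hx ▸ hw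
        exact Ideal.mem_colon_span_singleton.1 this
      obtain ⟨a, ha, b, hb, hab⟩ := Submodule.mem_sup.1 hwx
      obtain ⟨t, rfl⟩ := Ideal.mem_span_singleton'.1 hb
      have : w * (p * x) = p * a + t * (p * u) := by rw [show p*a + t*(p*u) = p*(a + t*u) by ring, hab]; ring
      rw [this]
      exact I.add_mem (I.mul_mem_left p ha) (I.mul_mem_left t hpu)
    · intro hw
      have h1 : (w * p) * x ∈ I ⊔ Ideal.span {u} :=
        Ideal.mem_sup_left (by rwa [show w * p * x = w * (p * x) by ring])
      have h2 : w * p ∈ Q := by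
        rw [hx, Ideal.mem_colon_span_singleton]; exact h1
      exact (hQp.mem_or_mem h2).resolve_right hpQ

end Helpers

/-- for a pretty clean chain of monomial ideals
`I = I_0 ⊂ I_1 ⊂ … ⊂ I_r = S` with `I_i = I_{i-1} + S u_i` and `P_i = I_{i-1} : u_i`
prime, one has `ass (I_i) = {P_{i+1}, …, P_r}` for all `i`. -/
theorem ass_of_prettyClean_chain {K : Type*} [Field K] {n r : ℕ}
    (c : Fin (r + 1) → Ideal (MvPolynomial (Fin n) K))
    (hmono : ∀ i, IsMonomialIdeal (c i))
    (hchain : ∀ i : Fin r, c i.castSucc < c i.succ)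
    (htop : c (Fin.last r) = ⊤)
    (u : Fin r → (Fin n →₀ ℕ))
    (P : Fin r → Ideal (MvPolynomial (Fin n) K))
    (hsum : ∀ i : Fin r, c i.succ = c i.castSucc ⊔ Ideal.span {monomial (u i) 1})
    (hP : ∀ i : Fin r, P i = (c i.castSucc).colon (Ideal.span {(monomial (u i) 1 : MvPolynomial (Fin n) K)}))
    (hprime : ∀ i, (P i).IsPrime)
    (hpc : ∀ i j : Fin r, i < j → P i ≤ P j → P i = P j) :
    ∀ i : Fin (r + 1), ass (c i) = {Q | ∃ j : Fin r, (i : ℕ) ≤ (j : ℕ) ∧ Q = P j} := by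
  have key : ∀ i : Fin (r + 1), ass (c i) = {Q | ∃ j : Fin r, (i : ℕ) ≤ (j : ℕ) ∧ Q = P j} := by
    intro i
    induction i using Fin.reverseInduction with
    | last =>
      rw [htop]
      ext Q
      simp only [Set.mem_setOf_eq]
      constructor
      · intro hQ
        obtain ⟨hQp, s, rfl⟩ := (mem_ass_quot_iff _ _).1 hQ
        have htopc : (⊤ : Ideal (MvPolynomial (Fin n) K)).colon (Ideal.span {s}) = ⊤ := by
          ext w
          simp [Ideal.mem_colon_span_singleton]
        exact absurd htopc hQp.ne_top
      · rintro ⟨j, hj, rfl⟩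
        rw [Fin.val_last] at hj
        exact absurd hj (Nat.not_le.2 j.isLt)
    | cast i ih =>
      have hPp : ((c i.castSucc).colon (Ideal.span {(monomial (u i) 1 :
          MvPolynomial (Fin n) K)})).IsPrime := (hP i) ▸ hprime i
      ext Q
      simp only [Set.mem_setOf_eq]
      constructor
      · intro hQ
        rcases step1 (c i.castSucc) (monomial (u i) 1) hPp hQ with h | h
        · exact ⟨i, by simp, by rw [hP i]; exact h⟩
        · rw [← hsum i] at h
          have h' : Q ∈ ass (c i.succ) := h
          rw [ih] at h'
          obtain ⟨j, hj, hQj⟩ := h'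
          refine ⟨j, ?_, hQj⟩
          rw [Fin.val_succ] at hj
          rw [Fin.coe_castSucc]
          omega
      · rintro ⟨j, hj, rfl⟩
        rw [Fin.coe_castSucc] at hj
        rcases eq_or_lt_of_le hj with heq | hlt
        · have : i = j := Fin.ext heq
          subst this
          rw [hP i]
          exact step2 _ _ hPp
        · have hij : i < j := Fin.lt_def.2 hlt
          have hPj : P j ∈ ass (c i.succ) := by
            rw [ih]
            exact ⟨j, by rw [Fin.val_succ]; omega, rfl⟩
          rw [hsum i] at hPj
          rcases step3 (c i.castSucc) (monomial (u i) 1) hPj with h | h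
          · exact h
          · rw [← hP i] at h
            have : P i = P j := hpc i j hij h
            rw [← this, hP i]
            exact step2 _ _ hPp
  exact key


end Arxiv1703
end
end

section
/- Let I ⊆ S = K[x_1,…,x_n] be a pretty k-clean monomial ideal. Then I is k-clean if and only if ass(I) = min(I). -/
open MvPolynomial

noncomputable section

namespace Arxiv1703

variable {K : Type*} [Field K] {σ : Type*}

/-! ### Multicomplexes -/

variable {ι : Type*}

/-! ### Simplicial complexes -/

variable {V : Type*} [DecidableEq V]

section Helpers
variable {R : Type*} [CommRing R] [IsNoetherianRing R]

lemma ann_span_mk (I : Ideal R) (f : R) :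
    (Submodule.span R {(Ideal.Quotient.mk I f : R ⧸ I)}).annihilator
      = I.colon (Ideal.span {f}) := by
  ext r
  rw [Submodule.mem_annihilator_span_singleton, Ideal.mem_colon_span_singleton]
  rw [show r • (Ideal.Quotient.mk I f) = Ideal.Quotient.mk I (r * f) by
    rw [Algebra.smul_def, Ideal.Quotient.algebraMap_eq, ← map_mul]]
  rw [Ideal.Quotient.eq_zero_iff_mem]

lemma mem_assPrimes_iff {I P : Ideal R} :
    P ∈ associatedPrimes R (R ⧸ I) ↔ P.IsPrime ∧ ∃ f : R, P = I.colon (Ideal.span {f}) := by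
  constructor
  · intro h
    obtain ⟨hP, x, hx⟩ := isAssociatedPrime_iff.mp h
    obtain ⟨f, rfl⟩ := Ideal.Quotient.mk_surjective x
    exact ⟨hP, f, by rw [hx, Submodule.bot_colon', ann_span_mk]⟩
  · rintro ⟨hP, f, hf⟩
    exact isAssociatedPrime_iff.mpr
      ⟨hP, Ideal.Quotient.mk I f, by rw [hf, Submodule.bot_colon', ann_span_mk]⟩

lemma le_of_mem_assPrimes {I P : Ideal R} (h : P ∈ associatedPrimes R (R ⧸ I)) : I ≤ P := by
  obtain ⟨hP, f, rfl⟩ := mem_assPrimes_iff.mp h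
  intro g hg
  rw [Ideal.mem_colon_span_singleton]
  exact Ideal.mul_mem_right f _ hg

lemma colon_colon_singleton (I : Ideal R) (u f : R) :
    (I.colon (Ideal.span {u})).colon (Ideal.span {f}) = I.colon (Ideal.span {u * f}) := by
  ext r
  rw [Ideal.mem_colon_span_singleton, Ideal.mem_colon_span_singleton, Ideal.mem_colon_span_singleton]
  rw [show r * f * u = r * (u * f) by ring]

/-- Fact 1: `ass(I : u) ⊆ ass I`. -/
lemma assPrimes_colon_subset (I : Ideal R) (u : R) :
    associatedPrimes R (R ⧸ I.colon (Ideal.span {u})) ⊆ associatedPrimes R (R ⧸ I) := by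
  intro P hP
  obtain ⟨hPp, f, rfl⟩ := mem_assPrimes_iff.mp hP
  exact mem_assPrimes_iff.mpr ⟨hPp, u * f, colon_colon_singleton I u f⟩

/-- Fact 2: `ass I ⊆ ass(I : u) ∪ ass(I + Su)`. -/
lemma assPrimes_subset_union (I : Ideal R) (u : R) :
    associatedPrimes R (R ⧸ I) ⊆
      associatedPrimes R (R ⧸ I.colon (Ideal.span {u}))
      ∪ associatedPrimes R (R ⧸ (I ⊔ Ideal.span {u})) := by
  intro P hP
  obtain ⟨hPp, f, hPeq⟩ := mem_assPrimes_iff.mp hP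
  by_cases hcase : ∃ g, g ∉ P ∧ g * f ∈ I ⊔ Ideal.span {u}
  · left
    obtain ⟨g, hg, hgf⟩ := hcase
    rw [Submodule.mem_sup] at hgf
    obtain ⟨a, haI, c, hc, hsum⟩ := hgf
    rw [Ideal.mem_span_singleton'] at hc
    obtain ⟨b, rfl⟩ := hc
    refine mem_assPrimes_iff.mpr ⟨hPp, b, ?_⟩
    rw [colon_colon_singleton]
    ext q
    rw [Ideal.mem_colon_span_singleton]
    constructor
    · intro hq
      have hqf : q * f ∈ I := by
        rw [hPeq, Ideal.mem_colon_span_singleton] at hq; exact hq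
      rw [show q * (u * b) = (q * f) * g - q * a by linear_combination q * hsum]
      exact Ideal.sub_mem _ (Ideal.mul_mem_right _ _ hqf) (Ideal.mul_mem_left _ _ haI)
    · intro hq
      have h1 : (q * g) * f ∈ I := by
        rw [show (q * g) * f = q * (u * b) + q * a by linear_combination (-q) * hsum]
        exact Ideal.add_mem _ hq (Ideal.mul_mem_left _ _ haI)
      have : q * g ∈ P := by rw [hPeq, Ideal.mem_colon_span_singleton]; exact h1
      exact (hPp.mem_or_mem this).resolve_right hg
  · right
    push_neg at hcase
    have heq : P = (I ⊔ Ideal.span {u}).colon (Ideal.span {f}) := by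
      apply le_antisymm
      · intro q hq
        rw [Ideal.mem_colon_span_singleton]
        have : q * f ∈ I := by rw [hPeq, Ideal.mem_colon_span_singleton] at hq; exact hq
        exact Ideal.mem_sup_left this
      · intro q hq
        rw [Ideal.mem_colon_span_singleton] at hq
        by_contra hqP
        exact hcase q hqP hq
    exact mem_assPrimes_iff.mpr ⟨hPp, f, heq⟩

/-- Fact 3: under the pretty-cleaner condition and `min(I:u) ⊆ ass(I:u)`,
`ass(I + Su) ⊆ ass I`. -/
lemma assPrimes_sup_subset (I : Ideal R) (u : R)
    (hcl : ∀ P ∈ associatedPrimes R (R ⧸ I.colon (Ideal.span {u})),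
      ∀ Q ∈ associatedPrimes R (R ⧸ (I ⊔ Ideal.span {u})), P ≤ Q → P = Q)
    (hmin : (I.colon (Ideal.span {u})).minimalPrimes
      ⊆ associatedPrimes R (R ⧸ I.colon (Ideal.span {u}))) :
    associatedPrimes R (R ⧸ (I ⊔ Ideal.span {u})) ⊆ associatedPrimes R (R ⧸ I) := by
  intro Q hQ
  obtain ⟨hQp, f, hQeq⟩ := mem_assPrimes_iff.mp hQ
  by_cases hle : I.colon (Ideal.span {u}) ≤ Q
  · haveI := hQp
    obtain ⟨P, hPmin, hPQ⟩ := Ideal.exists_minimalPrimes_le hle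
    have := hcl P (hmin hPmin) Q hQ hPQ
    rw [← this]
    exact assPrimes_colon_subset I u (hmin hPmin)
  · obtain ⟨s, hs, hsQ⟩ := SetLike.not_le_iff_exists.mp hle
    have hsu : s * u ∈ I := by rwa [Ideal.mem_colon_span_singleton] at hs
    refine mem_assPrimes_iff.mpr ⟨hQp, s * f, ?_⟩
    apply le_antisymm
    · intro q hq
      rw [Ideal.mem_colon_span_singleton]
      have : q * f ∈ I ⊔ Ideal.span {u} := by
        rw [hQeq, Ideal.mem_colon_span_singleton] at hq; exact hq
      rw [Submodule.mem_sup] at this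
      obtain ⟨a, haI, c, hc, hsum⟩ := this
      rw [Ideal.mem_span_singleton'] at hc
      obtain ⟨b, rfl⟩ := hc
      rw [show q * (s * f) = s * a + b * (s * u) by linear_combination (-s) * hsum]
      exact Ideal.add_mem _ (Ideal.mul_mem_left _ _ haI) (Ideal.mul_mem_left _ _ hsu)
    · intro q hq
      rw [Ideal.mem_colon_span_singleton] at hq
      have : (q * s) * f ∈ I ⊔ Ideal.span {u} :=
        Ideal.mem_sup_left (by rw [show (q * s) * f = q * (s * f) by ring]; exact hq)
      have hqs : q * s ∈ Q := by rw [hQeq, Ideal.mem_colon_span_singleton]; exact this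
      exact (hQp.mem_or_mem hqs).resolve_right hsQ

/-- associated primes of `R ⧸ P` for `P` prime. -/
lemma assPrimes_of_prime {P : Ideal R} (hP : P.IsPrime) :
    associatedPrimes R (R ⧸ P) = {P} := by
  ext Q
  constructor
  · intro hQ
    obtain ⟨hQp, f, hQeq⟩ := mem_assPrimes_iff.mp hQ
    have hfP : f ∉ P := by
      intro hf
      apply hQp.ne_top
      rw [hQeq, Ideal.eq_top_iff_one, Ideal.mem_colon_span_singleton, one_mul]
      exact hf
    have : Q = P := by
      rw [hQeq]
      ext q
      rw [Ideal.mem_colon_span_singleton]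
      exact ⟨fun h => (hP.mem_or_mem h).resolve_right hfP,
        fun h => Ideal.mul_mem_right _ _ h⟩
    exact this
  · rintro rfl
    refine mem_assPrimes_iff.mpr ⟨hP, 1, ?_⟩
    ext q
    rw [Ideal.mem_colon_span_singleton, mul_one]

lemma minimalPrimes_of_prime {P : Ideal R} (hP : P.IsPrime) :
    P.minimalPrimes = {P} := by
  ext Q
  constructor
  · rintro ⟨⟨hQp, hPQ⟩, hmin⟩
    exact le_antisymm (hmin ⟨hP, le_refl P⟩ hPQ) hPQ
  · rintro rfl
    exact ⟨⟨hP, le_refl _⟩, fun _ hQ _ => hQ.2⟩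

/-- transfer minimality: if `P` is minimal over `I` and `I ≤ J ≤ P`, `P` is minimal over `J`. -/
lemma mem_minimalPrimes_of_le {I J P : Ideal R} (hP : P ∈ I.minimalPrimes)
    (hIJ : I ≤ J) (hJP : J ≤ P) : P ∈ J.minimalPrimes := by
  obtain ⟨⟨hPp, _⟩, hmin⟩ := hP
  exact ⟨⟨hPp, hJP⟩, fun Q hQ hQP => hmin ⟨hQ.1, le_trans hIJ hQ.2⟩ hQP⟩

lemma isPrime_of_mem_minimalPrimes {I P : Ideal R} (hP : P ∈ I.minimalPrimes) :
    P.IsPrime := hP.1.1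

lemma le_of_mem_minimalPrimes {I P : Ideal R} (hP : P ∈ I.minimalPrimes) :
    I ≤ P := hP.1.2

end Helpers

section MainProof

lemma key_induction {K : Type*} [Field K] {n : ℕ} {k : ℕ}
    {I : Ideal (MvPolynomial (Fin n) K)} (h : PrettyKClean k I) :
    I.minimalPrimes ⊆ ass I ∧ (ass I = I.minimalPrimes → KClean k I) := by
  induction h with
  | prime I h =>
    have heq : ass I = I.minimalPrimes := by
      show associatedPrimes _ _ = _
      rw [assPrimes_of_prime h, minimalPrimes_of_prime h]
    exact ⟨by rw [heq], fun _ => KClean.prime I h⟩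
  | step I a ha hu hsupp hcl h1 h2 ih1 ih2 =>
    have h1sub : ass (I.colon (Ideal.span {(monomial a 1 : MvPolynomial (Fin n) K)}))
        ⊆ ass I := assPrimes_colon_subset I (monomial a 1)
    have h3 : ass (I ⊔ Ideal.span {monomial a 1}) ⊆ ass I :=
      assPrimes_sup_subset I (monomial a 1) hcl ih1.1
    have hIJ1 : I ≤ I.colon (Ideal.span {(monomial a 1 : MvPolynomial (Fin n) K)}) := fun g hg =>
      Ideal.mem_colon_span_singleton.mpr (Ideal.mul_mem_right _ _ hg)
    have hIJ2 : I ≤ I ⊔ Ideal.span {monomial a 1} := le_sup_left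
    have hfirst : I.minimalPrimes ⊆ ass I := by
      intro P hP
      have hPp := isPrime_of_mem_minimalPrimes hP
      have hIP := le_of_mem_minimalPrimes hP
      by_cases hup : (monomial a 1 : MvPolynomial (Fin n) K) ∈ P
      · have hJ2P : I ⊔ Ideal.span {monomial a 1} ≤ P :=
          sup_le hIP ((Ideal.span_singleton_le_iff_mem _).mpr hup)
        exact h3 (ih2.1 (mem_minimalPrimes_of_le hP hIJ2 hJ2P))
      · have hJ1P : I.colon (Ideal.span {(monomial a 1 : MvPolynomial (Fin n) K)}) ≤ P := by
          intro g hg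
          rw [Ideal.mem_colon_span_singleton] at hg
          exact (hPp.mem_or_mem (hIP hg)).resolve_right hup
        exact h1sub (ih1.1 (mem_minimalPrimes_of_le hP hIJ1 hJ1P))
    refine ⟨hfirst, fun hmin => ?_⟩
    refine KClean.step I a ha hu hmin hsupp ?_ ?_ ?_
    · -- cleaner condition
      rintro Q ⟨hQ2, -⟩
      have hQI : Q ∈ ass I := h3 hQ2
      refine ⟨hQI, fun Q' hQ' hle => ?_⟩
      have hQmin : Q ∈ I.minimalPrimes := hmin ▸ hQI
      have hQ'min : Q' ∈ I.minimalPrimes := hmin ▸ hQ'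
      exact le_antisymm hle (hQmin.2 ⟨hQ'min.1.1, hQ'min.1.2⟩ hle)
    · refine ih1.2 (Set.Subset.antisymm ?_ ih1.1)
      intro P hP
      exact mem_minimalPrimes_of_le (hmin ▸ h1sub hP) hIJ1 (le_of_mem_assPrimes hP)
    · refine ih2.2 (Set.Subset.antisymm ?_ ih2.1)
      intro P hP
      exact mem_minimalPrimes_of_le (hmin ▸ h3 hP) hIJ2 (le_of_mem_assPrimes hP)

end MainProof

/-- a pretty `k`-clean monomial ideal is `k`-clean iff `ass I = min I`. -/
theorem prettyKClean_kClean_iff {K : Type*} [Field K] {n : ℕ} (k : ℕ)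
    (I : Ideal (MvPolynomial (Fin n) K)) (hI : IsMonomialIdeal I)
    (h : PrettyKClean k I) :
    KClean k I ↔ ass I = I.minimalPrimes := by
  constructor
  · intro hK
    cases hK with
    | prime I h =>
      show associatedPrimes _ _ = _
      rw [assPrimes_of_prime h, minimalPrimes_of_prime h]
    | step I a ha hu hne hsupp hcl h1 h2 => exact hne
  · exact (key_induction h).2

end Arxiv1703
end
end

section
/- Let Γ ⊆ ℕ_∞^n be a k-decomposable multicomplex. Then for every a ∈ Γ ∩ ℕ^n the link lk_Γ(a) is a k-decomposable multicomplex. -/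
open MvPolynomial

noncomputable section

namespace Arxiv1703

variable {K : Type*} [Field K] {σ : Type*}

/-! ### Multicomplexes -/

variable {ι : Type*}

/-! ### Simplicial complexes -/

variable {V : Type*} [DecidableEq V]

section LinkAux

/-! ### ENat toolbox -/

lemma enat_add_sub (x : ENat) (p : ℕ) : (x + p) - p = x := by
  induction x using ENat.recTopCoe with
  | top => simp [ENat.top_sub_coe]
  | coe m => rw [← Nat.cast_add, ← ENat.coe_sub, Nat.add_sub_cancel]

lemma enat_le_sub_iff {x y : ENat} {p : ℕ} (h : ↑p ≤ y) : x ≤ y - ↑p ↔ x + ↑p ≤ y := by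
  induction y using ENat.recTopCoe with
  | top => simp [ENat.top_sub_coe]
  | coe m =>
    have hpm : p ≤ m := by exact_mod_cast h
    induction x using ENat.recTopCoe with
    | top => rw [← ENat.coe_sub]; simp only [top_add]; simp
    | coe x => rw [← ENat.coe_sub, ← Nat.cast_add, Nat.cast_le, Nat.cast_le]; omega

lemma enat_sub_eq_top {x : ENat} {p : ℕ} : x - ↑p = ⊤ ↔ x = ⊤ := by
  induction x using ENat.recTopCoe with
  | top => simp [ENat.top_sub_coe]
  | coe m => rw [← ENat.coe_sub]; exact iff_of_false (ENat.coe_ne_top _) (ENat.coe_ne_top _)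

lemma enat_add_eq_top {x : ENat} {p : ℕ} : x + ↑p = ⊤ ↔ x = ⊤ := by
  rw [ENat.add_eq_top]
  simp only [or_iff_left_iff_imp]
  exact fun h => absurd h (ENat.coe_ne_top p)

lemma enat_sub_shift {y : ENat} {p q : ℕ} (h : ↑p + ↑q ≤ y) :
    y - ↑p = ↑q + (y - (↑p + ↑q)) := by
  induction y using ENat.recTopCoe with
  | top => rw [ENat.top_sub_coe, ← Nat.cast_add, ENat.top_sub_coe]; simp
  | coe m =>
    rw [← Nat.cast_add] at h ⊢
    have h' : p + q ≤ m := by exact_mod_cast h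
    rw [← ENat.coe_sub, ← ENat.coe_sub, ← Nat.cast_add]
    congr 1; omega

lemma enat_Iic_finite (k : ℕ) : (Set.Iic (k:ENat)).Finite := by
  have : Set.Iic (k:ENat) ⊆ Nat.cast '' Set.Iic k := by
    intro x hx
    rw [Set.mem_Iic] at hx
    induction x using ENat.recTopCoe with
    | top => simp at hx
    | coe m => exact ⟨m, by simpa using hx, rfl⟩
  exact ((Set.finite_Iic k).image _).subset this

/-! ### pointwise (Pi) toolbox -/

variable {a b d t : ι → ℕ} {x y c f : ι → ENat}

lemma natFace_le_iff : natFace a ≤ natFace b ↔ a ≤ b := by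
  constructor <;> intro h i <;> have := h i <;> simpa [natFace] using this

lemma natFace_add : natFace (a + b) = natFace a + natFace b := by
  funext i; simp [natFace]

lemma natFace_sub : natFace (a - b) = natFace a - natFace b := by
  funext i; simp [natFace, ENat.coe_sub]

lemma pi_add_sub (x : ι → ENat) (a : ι → ℕ) : (x + natFace a) - natFace a = x := by
  funext i; exact enat_add_sub _ _

lemma pi_sub_add (h : natFace a ≤ x) : (x - natFace a) + natFace a = x := by
  funext i
  exact tsub_add_cancel_of_le (h i)

lemma pi_le_sub_iff (h : natFace a ≤ c) : x ≤ c - natFace a ↔ x + natFace a ≤ c := by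
  constructor <;> intro hx i <;> have := hx i
  · exact (enat_le_sub_iff (h i)).1 this
  · exact (enat_le_sub_iff (h i)).2 this

lemma pi_sub_le (a : ι → ℕ) (h : x ≤ y) : x - natFace a ≤ y - natFace a :=
  fun i => tsub_le_tsub_right (h i) _

lemma infpt_sub : infpt (x - natFace a) = infpt x := by
  ext i; exact enat_sub_eq_top

lemma infpt_add : infpt (x + natFace a) = infpt x := by
  ext i; exact enat_add_eq_top

lemma fpt_sub : fpt (x - natFace a) = fpt x := by
  ext i; exact not_congr enat_sub_eq_top

lemma pi_sub_sub (x : ι → ENat) (a t : ι → ℕ) :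
    x - natFace a - natFace t = x - (natFace a + natFace t) := by
  funext i; exact tsub_tsub _ _ _

lemma pi_maxsplit : natFace (a + (b - a)) ≤ c ↔ (natFace a ≤ c ∧ natFace b ≤ c) := by
  constructor
  · intro h
    constructor <;> intro i <;> refine le_trans ?_ (h i) <;>
      · show ((_ : ℕ) : ENat) ≤ ((_ : ℕ) : ENat)
        rw [Nat.cast_le]
        simp only [Pi.add_apply, Pi.sub_apply]
        omega
  · rintro ⟨h1, h2⟩ i
    have h1i := h1 i; have h2i := h2 i
    revert h1i h2i
    generalize c i = z
    intro h1i h2i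
    induction z using ENat.recTopCoe with
    | top => exact le_top
    | coe m =>
      rw [show natFace a i = ((a i : ℕ) : ENat) from rfl] at h1i
      rw [show natFace b i = ((b i : ℕ) : ENat) from rfl] at h2i
      rw [Nat.cast_le] at h1i h2i
      show ((_ : ℕ) : ENat) ≤ _
      rw [Nat.cast_le]
      simp only [Pi.add_apply, Pi.sub_apply]
      omega

lemma pi_sub_shift (h : natFace (a + t) ≤ y) :
    y - natFace a = natFace t + (y - natFace (a + t)) := by
  funext i
  have := h i
  simp only [natFace, Pi.add_apply, Nat.cast_add] at this ⊢
  simpa [Pi.sub_apply, Pi.add_apply, natFace] using enat_sub_shift this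


/-! ### structural lemmas -/

variable {Γ : Set (ι → ENat)} {S U : Set (ι → ENat)}

lemma mem_mcSpan {A : Set (ι → ENat)} {x : ι → ENat} : x ∈ mcSpan A ↔ ∃ a ∈ A, x ≤ a :=
  Iff.rfl

lemma mcSpan_subset_of_dom (h : ∀ s ∈ S, ∃ u ∈ U, s ≤ u) : mcSpan S ⊆ mcSpan U := by
  rintro x ⟨s, hs, hxs⟩
  obtain ⟨u, hu, hsu⟩ := h s hs
  exact ⟨u, hu, le_trans hxs hsu⟩

lemma mcSpan_eq_of_dom (h1 : ∀ s ∈ S, ∃ u ∈ U, s ≤ u) (h2 : ∀ u ∈ U, ∃ s ∈ S, u ≤ s) :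
    mcSpan S = mcSpan U :=
  Set.Subset.antisymm (mcSpan_subset_of_dom h1) (mcSpan_subset_of_dom h2)

lemma infpt_mono {x y : ι → ENat} (h : x ≤ y) : infpt x ⊆ infpt y := by
  intro i hi
  have hxy := h i
  have hx : x i = ⊤ := hi
  show y i = ⊤
  rw [hx] at hxy
  exact top_le_iff.1 hxy

lemma maxElts_subset_facets : maxElts Γ ⊆ facets Γ := by
  intro m hm
  exact ⟨hm.1, fun m' hm' hle => by rw [hm.2 m' hm'.1 hle]⟩

lemma exists_max (hΓ : IsMulticomplex Γ) {x : ι → ENat} (hx : x ∈ Γ) :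
    ∃ m ∈ maxElts Γ, x ≤ m := by
  obtain ⟨m, hm, hxm, hmax⟩ := hΓ.2 x hx
  exact ⟨m, ⟨hm, hmax⟩, hxm⟩

lemma facets_subset : facets Γ ⊆ Γ := fun _ h => h.1

lemma maxElts_finite [Finite ι] : (maxElts Γ).Finite := by
  have hanti : IsAntichain (· ≤ ·) (maxElts Γ) := by
    intro p hp q hq hne hle
    exact hne (hp.2 q hq.1 hle)
  haveI : IsWellOrder ℕ∞ (· < ·) := { }
  exact hanti.finite_of_partiallyWellOrderedOn (Set.isPWO_of_wellQuasiOrderedLE _)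

lemma box_finite [Finite ι] (m : ι → ENat) : {c : ι → ENat | c ≤ m ∧ infpt c = infpt m}.Finite := by
  have hsub : {c : ι → ENat | c ≤ m ∧ infpt c = infpt m} ⊆
      Set.pi Set.univ (fun i => if m i = ⊤ then {⊤} else Set.Iic (m i)) := by
    rintro c ⟨hle, hinf⟩ i _
    by_cases hm : m i = ⊤
    · simp only [hm, if_pos]
      have : i ∈ infpt c := by rw [hinf]; exact hm
      exact this
    · simp only [hm, if_neg, if_false]
      exact hle i
  refine (Set.Finite.pi ?_).subset hsub
  intro i
  by_cases hm : m i = ⊤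
  · simp [hm]
  · simp only [hm, if_neg, if_false]
    obtain ⟨k, hk⟩ := WithTop.ne_top_iff_exists.1 hm
    rw [← hk]
    exact enat_Iic_finite k

lemma facets_finite [Finite ι] (hΓ : IsMulticomplex Γ) : (facets Γ).Finite := by
  have hsub : facets Γ ⊆ ⋃ m ∈ maxElts Γ, {c : ι → ENat | c ≤ m ∧ infpt c = infpt m} := by
    intro c hc
    obtain ⟨m, hm, hcm⟩ := exists_max hΓ hc.1
    exact Set.mem_biUnion hm ⟨hcm, hc.2 m hm hcm⟩
  exact ((maxElts_finite).biUnion (fun m _ => box_finite m)).subset hsub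

lemma subMC_isMulticomplex [Finite ι] (hΓ : IsMulticomplex Γ) (hS : S ⊆ facets Γ) :
    IsMulticomplex (mcSpan S) := by
  constructor
  · rintro x ⟨s, hs, hxs⟩ y hyx
    exact ⟨s, hs, le_trans hyx hxs⟩
  · rintro x ⟨s₀, hs₀, hxs₀⟩
    have hTfin : {s ∈ S | s₀ ≤ s}.Finite :=
      ((facets_finite hΓ).subset hS).subset (fun s hs => hs.1)
    obtain ⟨sm, hsmT, hsmax⟩ := Set.Finite.exists_maximalFor id _ hTfin ⟨s₀, hs₀, le_rfl⟩
    refine ⟨sm, ⟨sm, hsmT.1, le_rfl⟩, le_trans hxs₀ hsmT.2, ?_⟩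
    rintro z ⟨s', hs', hzs'⟩ hsmz
    have hs'T : s' ∈ {s ∈ S | s₀ ≤ s} := ⟨hs', le_trans hsmT.2 (le_trans hsmz hzs')⟩
    have heq : sm = s' := le_antisymm (le_trans hsmz hzs') (hsmax hs'T (le_trans hsmz hzs'))
    subst heq
    exact le_antisymm hsmz hzs'

lemma facets_squeeze (hΓ : IsMulticomplex Γ) (hS : S ⊆ facets Γ) {c : ι → ENat}
    (hc : c ∈ facets Γ) (hcm : c ∈ mcSpan S) : c ∈ facets (mcSpan S) := by
  refine ⟨hcm, ?_⟩
  rintro m' ⟨hm'1, _⟩ hle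
  obtain ⟨s, hsS, hm's⟩ := hm'1
  have hm'Γ : m' ∈ Γ := hΓ.1 s (facets_subset (hS hsS)) m' hm's
  obtain ⟨m, hm, hm'm⟩ := exists_max hΓ hm'Γ
  have h1 : infpt c = infpt m := hc.2 m hm (le_trans hle hm'm)
  refine Set.Subset.antisymm (infpt_mono hle) ?_
  rw [h1]
  exact infpt_mono hm'm

/-! ### the link of a multicomplex -/

lemma link_core (hΓ : IsMulticomplex Γ) (a : ι → ℕ) :
    IsMulticomplex (link Γ (natFace a)) ∧
    maxElts (link Γ (natFace a))
      = (fun x => x - natFace a) '' {m | m ∈ maxElts Γ ∧ natFace a ≤ m} ∧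
    facets (link Γ (natFace a))
      = (fun x => x - natFace a) '' {c | c ∈ facets Γ ∧ natFace a ≤ c} := by
  set A := natFace a with hA
  set L := link Γ A with hL
  have hmemL : ∀ x, x ∈ L ↔ ∃ c, (c ∈ facets Γ ∧ A ≤ c) ∧ x ≤ c - A := by
    intro x
    constructor
    · rintro ⟨e, ⟨c, hc, rfl⟩, hxe⟩
      exact ⟨c, hc, hxe⟩
    · rintro ⟨c, hc, hxc⟩
      exact ⟨c - A, ⟨c, hc, rfl⟩, hxc⟩
  have hMM : ∀ m, m ∈ maxElts Γ → A ≤ m → (m - A) ∈ maxElts L := by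
    intro m hm hAm
    constructor
    · exact (hmemL _).2 ⟨m, ⟨maxElts_subset_facets hm, hAm⟩, le_rfl⟩
    · intro x hx hmx
      obtain ⟨c, ⟨hc, hAc⟩, hxc⟩ := (hmemL x).1 hx
      have hxA : x + A ≤ c := (pi_le_sub_iff hAc).1 hxc
      have hxAΓ : x + A ∈ Γ := hΓ.1 c (facets_subset hc) _ hxA
      have hm2 : m ≤ x + A := by
        calc m = (m - A) + A := (pi_sub_add hAm).symm
        _ ≤ x + A := fun i => add_le_add (hmx i) le_rfl
      have heq := hm.2 (x + A) hxAΓ hm2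
      rw [heq, pi_add_sub]
  have hcof : ∀ x ∈ L, ∃ m, m ∈ maxElts Γ ∧ A ≤ m ∧ x ≤ m - A := by
    intro x hx
    obtain ⟨c, ⟨hc, hAc⟩, hxc⟩ := (hmemL x).1 hx
    obtain ⟨m, hm, hcm⟩ := exists_max hΓ (facets_subset hc)
    exact ⟨m, hm, le_trans hAc hcm, le_trans hxc (pi_sub_le a hcm)⟩
  have hmc : IsMulticomplex L := by
    constructor
    · rintro x ⟨e, he, hxe⟩ y hyx
      exact ⟨e, he, le_trans hyx hxe⟩
    · intro x hx
      obtain ⟨m, hm, hAm, hxm⟩ := hcof x hx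
      have := hMM m hm hAm
      exact ⟨m - A, this.1, hxm, this.2⟩
  have hmax : maxElts L = (fun x => x - A) '' {m | m ∈ maxElts Γ ∧ A ≤ m} := by
    ext x
    constructor
    · intro hx
      obtain ⟨m, hm, hAm, hxm⟩ := hcof x hx.1
      have := hx.2 (m - A) (hMM m hm hAm).1 hxm
      exact ⟨m, ⟨hm, hAm⟩, this.symm⟩
    · rintro ⟨m, ⟨hm, hAm⟩, rfl⟩
      exact hMM m hm hAm
  refine ⟨hmc, hmax, ?_⟩
  ext d
  constructor
  · intro hd
    obtain ⟨c, ⟨hc, hAc⟩, hdc⟩ := (hmemL d).1 hd.1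
    have hdA : d + A ≤ c := (pi_le_sub_iff hAc).1 hdc
    have hyΓ : d + A ∈ Γ := hΓ.1 c (facets_subset hc) _ hdA
    have hAy : A ≤ d + A := fun i => le_add_self
    refine ⟨d + A, ⟨⟨hyΓ, ?_⟩, hAy⟩, pi_add_sub d a⟩
    intro m hm hym
    have hAm : A ≤ m := le_trans hAy hym
    have hdm : d ≤ m - A := by
      rw [← pi_add_sub d a]
      exact pi_sub_le a hym
    have h1 : infpt d = infpt (m - A) := hd.2 (m - A) (hMM m hm hAm) hdm
    rw [infpt_add, h1, infpt_sub]
  · rintro ⟨c, ⟨hc, hAc⟩, rfl⟩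
    refine ⟨(hmemL _).2 ⟨c, ⟨hc, hAc⟩, le_rfl⟩, ?_⟩
    intro m' hm' hle
    rw [hmax] at hm'
    obtain ⟨m, ⟨hm, hAm⟩, rfl⟩ := hm'
    have hcm : c ≤ m := by
      calc c = (c - A) + A := (pi_sub_add hAc).symm
      _ ≤ (m - A) + A := fun i => add_le_add (hle i) le_rfl
      _ = m := pi_sub_add hAm
    rw [infpt_sub, infpt_sub]
    exact hc.2 m hm hcm

lemma link_isMulticomplex (hΓ : IsMulticomplex Γ) (a : ι → ℕ) :
    IsMulticomplex (link Γ (natFace a)) := (link_core hΓ a).1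

lemma facets_link (hΓ : IsMulticomplex Γ) (a : ι → ℕ) :
    facets (link Γ (natFace a))
      = (fun x => x - natFace a) '' {c | c ∈ facets Γ ∧ natFace a ≤ c} :=
  (link_core hΓ a).2.2

lemma link_link (hΓ : IsMulticomplex Γ) {b d : ι → ℕ} (hbd : b ≤ d) :
    link (link Γ (natFace b)) (natFace (d - b)) = link Γ (natFace d) := by
  have hbd' : b + (d - b) = d := by
    funext i
    have hi : b i ≤ d i := hbd i
    show b i + (d i - b i) = d i
    omega
  have hBD : natFace b + natFace (d - b) = natFace d := by
    rw [← natFace_add, hbd']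
  apply mcSpan_eq_of_dom
  · rintro x ⟨e, ⟨he, hDe⟩, rfl⟩
    rw [facets_link hΓ b] at he
    obtain ⟨c, ⟨hc, hBc⟩, rfl⟩ := he
    have hDc : natFace d ≤ c := by
      rw [← hBD, add_comm]
      exact (pi_le_sub_iff hBc).1 hDe
    refine ⟨c - natFace d, ⟨c, ⟨hc, hDc⟩, rfl⟩, ?_⟩
    show c - natFace b - natFace (d - b) ≤ c - natFace d
    rw [pi_sub_sub, hBD]
  · rintro x ⟨c, ⟨hc, hDc⟩, rfl⟩
    have hBc : natFace b ≤ c := le_trans (natFace_le_iff.2 hbd) hDc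
    refine ⟨(c - natFace b) - natFace (d - b), ?_, ?_⟩
    · refine ⟨c - natFace b, ⟨?_, ?_⟩, rfl⟩
      · rw [facets_link hΓ b]
        exact ⟨c, ⟨hc, hBc⟩, rfl⟩
      · rw [pi_le_sub_iff hBc, add_comm, hBD]
        exact hDc
    · show c - natFace d ≤ c - natFace b - natFace (d - b)
      rw [pi_sub_sub, hBD]

/-! ### transfer lemmas for the shedding face -/

lemma mem_mcSpan_singleton {m x : ι → ENat} : x ∈ mcSpan {m} ↔ x ≤ m := by
  constructor
  · rintro ⟨u, hu, hx⟩
    rw [Set.mem_singleton_iff] at hu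
    exact hu ▸ hx
  · intro h
    exact ⟨m, rfl, h⟩

lemma sub_le_sub_iff' {a b : ι → ℕ} {c : ι → ENat} (hAc : natFace a ≤ c) :
    natFace (b - a) ≤ c - natFace a ↔ natFace b ≤ c := by
  rw [pi_le_sub_iff hAc]
  constructor
  · intro h
    refine ((pi_maxsplit (a := a) (b := b)).1 ?_).2
    calc natFace (a + (b - a)) = natFace a + natFace (b - a) := natFace_add
    _ = natFace (b - a) + natFace a := add_comm _ _
    _ ≤ c := h
  · intro h
    have h2 := pi_maxsplit.2 ⟨hAc, h⟩
    calc natFace (b - a) + natFace a = natFace a + natFace (b - a) := add_comm _ _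
    _ = natFace (a + (b - a)) := natFace_add.symm
    _ ≤ c := h2

lemma natFace_le_addsub (a b : ι → ℕ) : natFace b ≤ natFace (a + (b - a)) := by
  refine natFace_le_iff.2 (fun i => ?_)
  show b i ≤ a i + (b i - a i)
  omega

lemma mem_link_iff {a : ι → ℕ} {x : ι → ENat} :
    x ∈ link Γ (natFace a) ↔ ∃ c, (c ∈ facets Γ ∧ natFace a ≤ c) ∧ x ≤ c - natFace a := by
  constructor
  · rintro ⟨e, ⟨c, hc, rfl⟩, hxe⟩
    exact ⟨c, hc, hxe⟩
  · rintro ⟨c, hc, hxc⟩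
    exact ⟨c - natFace a, ⟨c, hc, rfl⟩, hxc⟩

lemma mem_del_link_iff (hΓ : IsMulticomplex Γ) (a b : ι → ℕ) {x : ι → ENat} :
    x ∈ del (link Γ (natFace a)) (natFace (b - a)) ↔
      ∃ c, c ∈ facets Γ ∧ natFace a ≤ c ∧ ¬ natFace b ≤ c ∧ x ≤ c - natFace a := by
  constructor
  · rintro ⟨e, ⟨he, hTe⟩, hxe⟩
    rw [facets_link hΓ a] at he
    obtain ⟨c, ⟨hc, hAc⟩, rfl⟩ := he
    exact ⟨c, hc, hAc, fun hBc => hTe ((sub_le_sub_iff' hAc).2 hBc), hxe⟩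
  · rintro ⟨c, hc, hAc, hBc, hxc⟩
    refine ⟨c - natFace a, ⟨?_, fun hT => hBc ((sub_le_sub_iff' hAc).1 hT)⟩, hxc⟩
    rw [facets_link hΓ a]
    exact ⟨c, ⟨hc, hAc⟩, rfl⟩

lemma del_link_eq [Finite ι] (hΓ : IsMulticomplex Γ) (a b : ι → ℕ) :
    del (link Γ (natFace a)) (natFace (b - a)) = link (del Γ (natFace b)) (natFace a) := by
  apply mcSpan_eq_of_dom
  · rintro e ⟨he, hTe⟩
    rw [facets_link hΓ a] at he
    obtain ⟨c, ⟨hc, hAc⟩, rfl⟩ := he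
    have hBc : ¬ natFace b ≤ c := fun hBc => hTe ((sub_le_sub_iff' hAc).2 hBc)
    have hcd : c ∈ facets (del Γ (natFace b)) :=
      facets_squeeze hΓ (fun g hg => hg.1) hc ⟨c, ⟨hc, hBc⟩, le_rfl⟩
    exact ⟨c - natFace a, ⟨c, ⟨hcd, hAc⟩, rfl⟩, le_rfl⟩
  · rintro e ⟨g, ⟨hg, hAg⟩, rfl⟩
    obtain ⟨dd, ⟨hdF, hdB⟩, hgd⟩ := hg.1
    have hAdd : natFace a ≤ dd := le_trans hAg hgd
    refine ⟨dd - natFace a, ⟨?_, fun hT => hdB ((sub_le_sub_iff' hAdd).1 hT)⟩, pi_sub_le a hgd⟩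
    rw [facets_link hΓ a]
    exact ⟨dd, ⟨hdF, hAdd⟩, rfl⟩

lemma star_link_eq [Finite ι] (hΓ : IsMulticomplex Γ) (a b : ι → ℕ) :
    star (link Γ (natFace a)) (natFace (b - a)) = link (star Γ (natFace b)) (natFace a) := by
  apply mcSpan_eq_of_dom
  · rintro e ⟨he, hTe⟩
    rw [facets_link hΓ a] at he
    obtain ⟨c, ⟨hc, hAc⟩, rfl⟩ := he
    have hBc : natFace b ≤ c := (sub_le_sub_iff' hAc).1 hTe
    have hcs : c ∈ facets (star Γ (natFace b)) :=
      facets_squeeze hΓ (fun g hg => hg.1) hc ⟨c, ⟨hc, hBc⟩, le_rfl⟩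
    exact ⟨c - natFace a, ⟨c, ⟨hcs, hAc⟩, rfl⟩, le_rfl⟩
  · rintro e ⟨g, ⟨hg, hAg⟩, rfl⟩
    obtain ⟨c, ⟨hcF, hcB⟩, hgc⟩ := hg.1
    have hAc : natFace a ≤ c := le_trans hAg hgc
    refine ⟨c - natFace a, ⟨?_, (sub_le_sub_iff' hAc).2 hcB⟩, pi_sub_le a hgc⟩
    rw [facets_link hΓ a]
    exact ⟨c, ⟨hcF, hAc⟩, rfl⟩

lemma mem_del_of_not_le [Finite ι] (hΓ : IsMulticomplex Γ) {b : ι → ℕ}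
    (hb : IsSheddingFace Γ b) {a : ι → ℕ} (ha : natFace a ∈ Γ) (hba : ¬ b ≤ a) :
    natFace a ∈ del Γ (natFace b) := by
  by_contra hdel
  obtain ⟨mx, hmx, hAm⟩ := exists_max hΓ ha
  have hmxF : mx ∈ facets Γ := maxElts_subset_facets hmx
  have hBm : natFace b ≤ mx := by
    by_contra hBm
    exact hdel ⟨mx, ⟨hmxF, hBm⟩, hAm⟩
  have hmstar : mx ∈ facets (star Γ (natFace b)) :=
    facets_squeeze hΓ (fun g hg => hg.1) hmxF ⟨mx, ⟨hmxF, hBm⟩, le_rfl⟩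
  obtain ⟨m', _, hSt⟩ := hb.2.1 mx hmstar
  have hmem : natFace a ∈ mcSpan {mx} \ del Γ (natFace b) := ⟨⟨mx, rfl, hAm⟩, hdel⟩
  rw [hSt] at hmem
  obtain ⟨z, _, heq⟩ := hmem
  apply hba
  rw [← natFace_le_iff]
  intro i
  rw [← heq]
  exact le_self_add

lemma stanley_transfer [Finite ι] (hΓ : IsMulticomplex Γ) (a b : ι → ℕ) {f : ι → ENat}
    (hAf : natFace a ≤ f)
    (hSt : IsStanleySet b (mcSpan {f} \ del Γ (natFace b))) :
    IsStanleySet (b - a)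
      (mcSpan {f - natFace a} \ del (link Γ (natFace a)) (natFace (b - a))) := by
  obtain ⟨m, hm01, hTeq⟩ := hSt
  have hBf : natFace b ≤ f := by
    have h0 : natFace b ∈ mcSpan {f} \ del Γ (natFace b) := by
      rw [hTeq]
      exact ⟨0, mem_mcSpan_singleton.2 (fun i => zero_le), add_zero _⟩
    exact mem_mcSpan_singleton.1 h0.1
  have hBmf : natFace b + m ≤ f := by
    have h0 : natFace b + m ∈ mcSpan {f} \ del Γ (natFace b) := by
      rw [hTeq]
      exact ⟨m, mem_mcSpan_singleton.2 le_rfl, rfl⟩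
    exact mem_mcSpan_singleton.1 h0.1
  have hABf : natFace (a + (b - a)) ≤ f := pi_maxsplit.2 ⟨hAf, hBf⟩
  refine ⟨m, hm01, ?_⟩
  ext x
  constructor
  · rintro ⟨hx1, hx2⟩
    have hxu : x ≤ f - natFace a := mem_mcSpan_singleton.1 hx1
    have hxA : x + natFace a ≤ f := (pi_le_sub_iff hAf).1 hxu
    have hAxA : natFace a ≤ x + natFace a := fun i => le_add_self
    have hynd : x + natFace a ∉ del Γ (natFace b) := by
      rintro ⟨c', ⟨hc', hBc'⟩, hyc'⟩
      refine hx2 ((mem_del_link_iff hΓ a b).2 ⟨c', hc', le_trans hAxA hyc', hBc', ?_⟩)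
      rw [← pi_add_sub x a]
      exact pi_sub_le a hyc'
    have hyT : x + natFace a ∈ (fun y => natFace b + y) '' mcSpan {m} := by
      rw [← hTeq]
      exact ⟨mem_mcSpan_singleton.2 hxA, hynd⟩
    obtain ⟨z, hz, hzeq⟩ := hyT
    have hzm : z ≤ m := mem_mcSpan_singleton.1 hz
    have hBy : natFace b ≤ x + natFace a := by
      rw [← hzeq]
      intro i
      exact le_self_add
    have hABy : natFace (a + (b - a)) ≤ x + natFace a := pi_maxsplit.2 ⟨hAxA, hBy⟩
    refine ⟨(x + natFace a) - natFace (a + (b - a)), mem_mcSpan_singleton.2 ?_, ?_⟩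
    · intro i
      rcases hm01 i with h0 | htop
      · have hz0 : z i = 0 := le_antisymm (le_trans (hzm i) (le_of_eq h0)) zero_le
        have hyb : (x + natFace a) i = ((b i : ℕ) : ENat) := by
          rw [← hzeq]
          show natFace b i + z i = _
          rw [hz0, add_zero]
          rfl
        have hle : (x + natFace a) i ≤ natFace (a + (b - a)) i := by
          rw [hyb]
          show ((b i : ℕ) : ENat) ≤ ((a i + (b i - a i) : ℕ) : ENat)
          rw [Nat.cast_le]
          omega
        show (x + natFace a) i - natFace (a + (b - a)) i ≤ m i
        rw [tsub_eq_zero_of_le hle]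
        exact zero_le
      · exact le_trans le_top (le_of_eq htop.symm)
    · show natFace (b - a) + ((x + natFace a) - natFace (a + (b - a))) = x
      rw [← pi_sub_shift hABy, pi_add_sub]
  · rintro ⟨w, hw, rfl⟩
    have hwm : w ≤ m := mem_mcSpan_singleton.1 hw
    have hxA : (natFace (b - a) + w) + natFace a = natFace (a + (b - a)) + w := by
      rw [add_comm (natFace (b - a) + w) (natFace a), ← add_assoc, ← natFace_add]
    have hxAf : (natFace (b - a) + w) + natFace a ≤ f := by
      rw [hxA]
      intro i
      rcases hm01 i with h0 | htop
      · have hw0 : w i = 0 := le_antisymm (le_trans (hwm i) (le_of_eq h0)) zero_le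
        show natFace (a + (b - a)) i + w i ≤ f i
        rw [hw0, add_zero]
        exact hABf i
      · have hfi : f i = ⊤ := by
          have h2 := hBmf i
          rw [show (natFace b + m) i = natFace b i + m i from rfl, htop, add_top] at h2
          exact top_le_iff.1 h2
        show _ ≤ f i
        rw [hfi]
        exact le_top
    constructor
    · exact mem_mcSpan_singleton.2 ((pi_le_sub_iff hAf).2 hxAf)
    · intro hdel
      obtain ⟨c, hcF, hAc, hBc, hxc⟩ := (mem_del_link_iff hΓ a b).1 hdel
      have hxAc : (natFace (b - a) + w) + natFace a ≤ c := (pi_le_sub_iff hAc).1 hxc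
      have hBwc : natFace b + w ≤ c := by
        refine le_trans ?_ hxAc
        rw [hxA]
        exact fun i => add_le_add (natFace_le_addsub a b i) le_rfl
      have hBwT : natFace b + w ∈ mcSpan {f} \ del Γ (natFace b) := by
        rw [hTeq]
        exact ⟨w, mem_mcSpan_singleton.2 hwm, rfl⟩
      exact hBwT.2 ⟨c, ⟨hcF, hBc⟩, hBwc⟩

/-! ### the main induction -/

theorem mcKDec_link_aux [Finite ι] (k : ℕ) {Γ : Set (ι → ENat)} (h : MCKDecomposable k Γ) :
    IsMulticomplex Γ → ∀ a : ι → ℕ, natFace a ∈ Γ →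
      MCKDecomposable k (link Γ (natFace a)) := by
  induction h with
  | single Γ h =>
    intro hΓ a ha
    obtain ⟨m0, hm0, huniq⟩ := h
    obtain ⟨m, hm, hAm⟩ := exists_max hΓ ha
    have hmm0 : m = m0 := huniq m (maxElts_subset_facets hm)
    subst hmm0
    apply MCKDecomposable.single
    refine ⟨m - natFace a, ?_, ?_⟩
    · rw [facets_link hΓ a]
      exact ⟨m, ⟨hm0, hAm⟩, rfl⟩
    · intro y hy
      rw [facets_link hΓ a] at hy
      obtain ⟨c, ⟨hc, hAc⟩, rfl⟩ := hy
      rw [huniq c hc]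
  | shed Γ b hb hcard h1 h2 ih1 ih2 =>
    intro hΓ a ha
    have hmcΛ₁ : IsMulticomplex (link Γ (natFace b)) := link_isMulticomplex hΓ b
    have hmcΛ₂ : IsMulticomplex (del Γ (natFace b)) :=
      subMC_isMulticomplex hΓ (fun g hg => hg.1)
    by_cases hba : b ≤ a
    · -- case b ≤ a : link Γ a = link (link Γ b) (a - b)
      rw [← link_link hΓ hba]
      apply ih1 hmcΛ₁
      obtain ⟨m, hm, hAm⟩ := exists_max hΓ ha
      have hBm : natFace b ≤ m := le_trans (natFace_le_iff.2 hba) hAm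
      refine ⟨m - natFace b, ⟨m, ⟨maxElts_subset_facets hm, hBm⟩, rfl⟩, ?_⟩
      rw [natFace_sub]
      exact pi_sub_le b hAm
    · -- case ¬ b ≤ a
      have hAdel : natFace a ∈ del Γ (natFace b) := mem_del_of_not_le hΓ hb ha hba
      by_cases hstar : ∃ c, c ∈ facets Γ ∧ natFace a ≤ c ∧ natFace b ≤ c
      · -- (ii-a) : shed with face b - a
        obtain ⟨c₀, hc₀F, hAc₀, hBc₀⟩ := hstar
        have hstarmc : IsMulticomplex (star Γ (natFace b)) :=
          subMC_isMulticomplex hΓ (fun g hg => hg.1)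
        refine MCKDecomposable.shed _ (b - a) ⟨?_, ?_, ?_⟩ ?_ ?_ ?_
        · -- natFace (b - a) ∈ link Γ a
          exact mem_link_iff.2 ⟨c₀, ⟨hc₀F, hAc₀⟩, (sub_le_sub_iff' hAc₀).2 hBc₀⟩
        · -- Stanley condition
          intro e he
          rw [star_link_eq hΓ a b, facets_link hstarmc a] at he
          obtain ⟨f, ⟨hfF, hAf⟩, rfl⟩ := he
          exact stanley_transfer hΓ a b hAf (hb.2.1 f hfF)
        · -- fpt condition
          intro e he e' he'
          rw [star_link_eq hΓ a b, facets_link hstarmc a] at he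
          obtain ⟨f, ⟨hfF, hAf⟩, rfl⟩ := he
          rw [del_link_eq hΓ a b, facets_link hmcΛ₂ a] at he'
          obtain ⟨g, ⟨hgF, hAg⟩, rfl⟩ := he'
          rw [fpt_sub, fpt_sub]
          exact hb.2.2 f hfF g hgF
        · -- cardinality
          have hsub : fptStar (natFace (b - a)) ⊆ fptStar (natFace b) := by
            rintro i ⟨h0, -⟩
            have hb0 : b i ≠ 0 := by
              intro hbi
              apply h0
              show (((b - a) i : ℕ) : ENat) = 0
              rw [Nat.cast_eq_zero]
              show b i - a i = 0
              omega
            refine ⟨fun hh => hb0 ?_, ENat.coe_ne_top _⟩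
            have hh' : ((b i : ℕ) : ENat) = 0 := hh
            exact_mod_cast hh'
          exact le_trans (Set.ncard_le_ncard hsub (Set.toFinite _)) hcard
        · -- link of link
          have hd : b - a = (a + (b - a)) - a := by
            funext i
            show b i - a i = (a i + (b i - a i)) - a i
            omega
          have had : a ≤ a + (b - a) := fun i => le_self_add
          have hbd : b ≤ a + (b - a) := fun i => by
            show b i ≤ a i + (b i - a i)
            omega
          rw [hd, link_link hΓ had, ← link_link hΓ hbd]
          apply ih1 hmcΛ₁
          have hdc₀ : natFace (a + (b - a)) ≤ c₀ := pi_maxsplit.2 ⟨hAc₀, hBc₀⟩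
          refine ⟨c₀ - natFace b, ⟨c₀, ⟨hc₀F, hBc₀⟩, rfl⟩, ?_⟩
          rw [natFace_sub]
          exact pi_sub_le b hdc₀
        · -- del
          rw [del_link_eq hΓ a b]
          exact ih2 hmcΛ₂ a hAdel
      · -- (ii-b) : link Γ a = link (del Γ b) a
        have heq : link Γ (natFace a) = link (del Γ (natFace b)) (natFace a) := by
          apply mcSpan_eq_of_dom
          · rintro e ⟨c, ⟨hc, hAc⟩, rfl⟩
            have hBc : ¬ natFace b ≤ c := fun hB => hstar ⟨c, hc, hAc, hB⟩
            have hcd : c ∈ facets (del Γ (natFace b)) :=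
              facets_squeeze hΓ (fun g hg => hg.1) hc ⟨c, ⟨hc, hBc⟩, le_rfl⟩
            exact ⟨c - natFace a, ⟨c, ⟨hcd, hAc⟩, rfl⟩, le_rfl⟩
          · rintro e ⟨g, ⟨hg, hAg⟩, rfl⟩
            obtain ⟨dd, ⟨hdF, hdB⟩, hgd⟩ := hg.1
            have hAdd : natFace a ≤ dd := le_trans hAg hgd
            exact ⟨dd - natFace a, ⟨dd, ⟨hdF, hAdd⟩, rfl⟩, pi_sub_le a hgd⟩
        rw [heq]
        exact ih2 hmcΛ₂ a hAdel

end LinkAux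

/-- every link of a `k`-decomposable multicomplex is `k`-decomposable. -/
theorem mcKDecomposable_link {n : ℕ} (k : ℕ) (Γ : Set (Fin n → ENat))
    (hΓ : IsMulticomplex Γ) (h : MCKDecomposable k Γ)
    (a : Fin n → ℕ) (ha : natFace a ∈ Γ) :
    MCKDecomposable k (link Γ (natFace a)) :=
  mcKDec_link_aux k h hΓ a ha

end Arxiv1703
end
end
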